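/- arXiv:2307.10080 — 4 statements merged into one kernel-verified Lean document; each statement's English description precedes it below -/
import Mathlib

section
/- Let X(1), X(2) ∈ 𝒳^L be two independent length-L i.i.d. P_X fragments, and let (Y(1),Y(2)) be the output of the memoryless channel P_{Y|X} applied to (X(1),X(2)). Define the transposition-likelihood-flip event Ẽ := { P_{Y|X}^{⊗2L}[(Y(2),Y(1)) | (X(1),X(2))] ≥ P_{Y|X}^{⊗2L}[(Y(1),Y(2)) | (X(1),X(2))] } and E := Ẽ ∩ {X(1) ≠ X(2)}. Assume d(x₁,x₂) < ∞ for all x₁,x₂ ∈ 𝒳 and 2·ψ₂(P_XY) < H₂(P_X), where H₂(P_X) := −log Σ_x P_X(x)². Then P[E] ≤ P[Ẽ] ≤ e^{−2L·ψ₂(P_XY)}, and for every ε > 0 there exists L₀ such that for all L ≥ L₀, P[E] ≥ e^{−2L·(ψ₂(P_XY)+ε)}. -/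
open Real BigOperators Finset
open scoped Classical

noncomputable section

/-- A probability mass function on a finite alphabet, as a real-valued function. -/
def IsPMF {α : Type*} [Fintype α] (P : α → ℝ) : Prop :=
  (∀ a, 0 ≤ P a) ∧ ∑ a, P a = 1

/-- The Bhattacharyya distance between two input symbols of the channel `W`. -/
def bhat {𝒳 𝒴 : Type*} [Fintype 𝒴] (W : 𝒳 → 𝒴 → ℝ) (x₁ x₂ : 𝒳) : ℝ :=
  - Real.log (∑ y, Real.sqrt (W x₁ y * W x₂ y))

/-- The Bhattacharyya distance of a joint PMF `Q` on `𝒳 × 𝒳`. -/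
def dQ {𝒳 𝒴 : Type*} [Fintype 𝒳] [Fintype 𝒴] (W : 𝒳 → 𝒴 → ℝ) (Q : 𝒳 × 𝒳 → ℝ) : ℝ :=
  ∑ p : 𝒳 × 𝒳, Q p * bhat W p.1 p.2

/-- Kullback-Leibler divergence between PMFs on a finite alphabet
(with the conventions `0 log 0 = 0`, valid since `Real.log 0 = 0` in Lean). -/
def klD {α : Type*} [Fintype α] (Q P : α → ℝ) : ℝ :=
  ∑ a, Q a * Real.log (Q a / P a)

/-- The rate function `ψ₂(P_XY)`. -/
def psi2 {𝒳 𝒴 : Type*} [Fintype 𝒳] [Fintype 𝒴] (P : 𝒳 → ℝ) (W : 𝒳 → 𝒴 → ℝ) : ℝ :=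
  sInf { v : ℝ | ∃ Q : 𝒳 × 𝒳 → ℝ, IsPMF Q ∧
    v = (1/2) * klD Q (fun p => P p.1 * P p.2) + dQ W Q }

/-- The order-2 Rényi (collision) entropy `H₂(P_X) = -log Σ_x P_X(x)²`. -/
def renyi2 {𝒳 : Type*} [Fintype 𝒳] (P : 𝒳 → ℝ) : ℝ :=
  - Real.log (∑ x, (P x) ^ 2)

/-- Probability of the transposition-likelihood-flip event `Ẽ` for two independent
i.i.d.-`P` length-`L` fragments observed through the memoryless channel `W`: the event
that the likelihood of the observations with the two fragments swapped is at least the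
likelihood with the correct order. -/
def probEtilde {𝒳 𝒴 : Type*} [Fintype 𝒳] [Fintype 𝒴]
    (P : 𝒳 → ℝ) (W : 𝒳 → 𝒴 → ℝ) (L : ℕ) : ℝ :=
  ∑ x₁ : Fin L → 𝒳, ∑ x₂ : Fin L → 𝒳, ∑ y₁ : Fin L → 𝒴, ∑ y₂ : Fin L → 𝒴,
    (∏ j, P (x₁ j)) * (∏ j, P (x₂ j)) *
      (∏ j, W (x₁ j) (y₁ j)) * (∏ j, W (x₂ j) (y₂ j)) *
      (if (∏ j, W (x₁ j) (y₁ j)) * (∏ j, W (x₂ j) (y₂ j)) ≤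
          (∏ j, W (x₁ j) (y₂ j)) * (∏ j, W (x₂ j) (y₁ j)) then 1 else 0)

/-- Probability of the event `E = Ẽ ∩ {X(1) ≠ X(2)}`. -/
def probE {𝒳 𝒴 : Type*} [Fintype 𝒳] [Fintype 𝒴]
    (P : 𝒳 → ℝ) (W : 𝒳 → 𝒴 → ℝ) (L : ℕ) : ℝ :=
  ∑ x₁ : Fin L → 𝒳, ∑ x₂ : Fin L → 𝒳, ∑ y₁ : Fin L → 𝒴, ∑ y₂ : Fin L → 𝒴,
    (∏ j, P (x₁ j)) * (∏ j, P (x₂ j)) *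
      (∏ j, W (x₁ j) (y₁ j)) * (∏ j, W (x₂ j) (y₂ j)) *
      (if ((∏ j, W (x₁ j) (y₁ j)) * (∏ j, W (x₂ j) (y₂ j)) ≤
          (∏ j, W (x₁ j) (y₂ j)) * (∏ j, W (x₂ j) (y₁ j))) ∧ x₁ ≠ x₂ then 1 else 0)

/-! ### Auxiliary lemmas -/

lemma sqrtProd {ι : Type*} (s : Finset ι) (f : ι → ℝ) (h : ∀ i, 0 ≤ f i) :
    Real.sqrt (∏ i ∈ s, f i) = ∏ i ∈ s, Real.sqrt (f i) := by
  induction s using Finset.cons_induction with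
  | empty => simp
  | cons a s ha ih => rw [Finset.prod_cons, Finset.prod_cons, Real.sqrt_mul (h a), ih]

lemma klNonneg {α : Type*} [Fintype α] (Q M : α → ℝ) (hQ0 : ∀ a, 0 ≤ Q a)
    (hQ1 : ∑ a, Q a = 1) (hM : ∀ a, 0 < M a) (hM1 : ∑ a, M a = 1) :
    0 ≤ ∑ a, Q a * Real.log (Q a / M a) := by
  have h : ∀ a, Q a - M a ≤ Q a * Real.log (Q a / M a) := by
    intro a
    rcases eq_or_lt_of_le (hQ0 a) with h0 | hpos
    · simp [← h0]; linarith [(hM a).le]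
    · have hlog : Real.log (M a / Q a) ≤ M a / Q a - 1 :=
        Real.log_le_sub_one_of_pos (div_pos (hM a) hpos)
      have : Real.log (M a / Q a) = - Real.log (Q a / M a) := by
        rw [← Real.log_inv]; congr 1; field_simp
      rw [this] at hlog
      have := mul_le_mul_of_nonneg_left hlog (hQ0 a)
      rw [mul_sub, mul_div_cancel₀ _ hpos.ne'] at this
      nlinarith
  calc (0:ℝ) = ∑ a, Q a - ∑ a, M a := by rw [hQ1, hM1]; ring
    _ = ∑ a, (Q a - M a) := by rw [Finset.sum_sub_distrib]
    _ ≤ _ := Finset.sum_le_sum (fun a _ => h a)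

lemma sum_fn_prod {β : Type*} [Fintype β] {L : ℕ} (F : Fin L → β → ℝ) :
    ∑ f : Fin L → β, ∏ j, F j (f j) = ∏ j, ∑ b, F j b := by
  rw [Finset.prod_univ_sum, Fintype.piFinset_univ]

lemma sum4 {𝒳 𝒴 : Type*} [Fintype 𝒳] [Fintype 𝒴] {L : ℕ}
    (g : Fin L → 𝒳 → 𝒳 → 𝒴 → 𝒴 → ℝ) :
    (∑ x₁ : Fin L → 𝒳, ∑ x₂ : Fin L → 𝒳, ∑ y₁ : Fin L → 𝒴, ∑ y₂ : Fin L → 𝒴,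
      ∏ j, g j (x₁ j) (x₂ j) (y₁ j) (y₂ j))
    = ∏ j, (∑ a, ∑ b, ∑ c, ∑ d, g j a b c d) := by
  have h1 : ∀ (x₁ x₂ : Fin L → 𝒳) (y₁ : Fin L → 𝒴),
      (∑ y₂ : Fin L → 𝒴, ∏ j, g j (x₁ j) (x₂ j) (y₁ j) (y₂ j))
      = ∏ j, ∑ d, g j (x₁ j) (x₂ j) (y₁ j) d :=
    fun x₁ x₂ y₁ => sum_fn_prod (fun j d => g j (x₁ j) (x₂ j) (y₁ j) d)
  simp only [h1]
  have h2 : ∀ (x₁ x₂ : Fin L → 𝒳),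
      (∑ y₁ : Fin L → 𝒴, ∏ j, ∑ d, g j (x₁ j) (x₂ j) (y₁ j) d)
      = ∏ j, ∑ c, ∑ d, g j (x₁ j) (x₂ j) c d :=
    fun x₁ x₂ => sum_fn_prod (fun j c => ∑ d, g j (x₁ j) (x₂ j) c d)
  simp only [h2]
  have h3 : ∀ (x₁ : Fin L → 𝒳),
      (∑ x₂ : Fin L → 𝒳, ∏ j, ∑ c, ∑ d, g j (x₁ j) (x₂ j) c d)
      = ∏ j, ∑ b, ∑ c, ∑ d, g j (x₁ j) b c d :=
    fun x₁ => sum_fn_prod (fun j b => ∑ c, ∑ d, g j (x₁ j) b c d)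
  simp only [h3]
  exact sum_fn_prod (fun j a => ∑ b, ∑ c, ∑ d, g j a b c d)

lemma sum4c {𝒳 𝒴 : Type*} [Fintype 𝒳] [Fintype 𝒴] {L : ℕ}
    (g : 𝒳 → 𝒳 → 𝒴 → 𝒴 → ℝ) :
    (∑ x₁ : Fin L → 𝒳, ∑ x₂ : Fin L → 𝒳, ∑ y₁ : Fin L → 𝒴, ∑ y₂ : Fin L → 𝒴,
      ∏ j, g (x₁ j) (x₂ j) (y₁ j) (y₂ j))
    = (∑ a, ∑ b, ∑ c, ∑ d, g a b c d) ^ L := by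
  rw [sum4 (fun _ a b c d => g a b c d)]
  simp [Finset.prod_const]

lemma sum3 {𝒳 𝒴 : Type*} [Fintype 𝒳] [Fintype 𝒴] {L : ℕ}
    (g : 𝒳 → 𝒴 → 𝒴 → ℝ) :
    (∑ x : Fin L → 𝒳, ∑ y₁ : Fin L → 𝒴, ∑ y₂ : Fin L → 𝒴,
      ∏ j, g (x j) (y₁ j) (y₂ j))
    = (∑ a, ∑ c, ∑ d, g a c d) ^ L := by
  have h1 : ∀ (x : Fin L → 𝒳) (y₁ : Fin L → 𝒴),
      (∑ y₂ : Fin L → 𝒴, ∏ j, g (x j) (y₁ j) (y₂ j)) = ∏ j, ∑ d, g (x j) (y₁ j) d :=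
    fun x y₁ => sum_fn_prod (fun j d => g (x j) (y₁ j) d)
  simp only [h1]
  have h2 : ∀ (x : Fin L → 𝒳),
      (∑ y₁ : Fin L → 𝒴, ∏ j, ∑ d, g (x j) (y₁ j) d) = ∏ j, ∑ c, ∑ d, g (x j) c d :=
    fun x => sum_fn_prod (fun j c => ∑ d, g (x j) c d)
  simp only [h2]
  rw [sum_fn_prod (fun j a => ∑ c, ∑ d, g a c d)]
  simp [Finset.prod_const]

section Defs
variable {𝒳 𝒴 : Type*} [Fintype 𝒳] [Fintype 𝒴]

def Bsum (W : 𝒳 → 𝒴 → ℝ) (a b : 𝒳) : ℝ := ∑ y, Real.sqrt (W a y * W b y)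

def Zc (P : 𝒳 → ℝ) (W : 𝒳 → 𝒴 → ℝ) : ℝ :=
  ∑ p : 𝒳 × 𝒳, P p.1 * P p.2 * (Bsum W p.1 p.2) ^ 2

def gam (P : 𝒳 → ℝ) (W : 𝒳 → 𝒴 → ℝ) (a b : 𝒳) (c d : 𝒴) : ℝ :=
  P a * P b * Real.sqrt (W a c * W b d * (W a d * W b c))

def lamf (W : 𝒳 → 𝒴 → ℝ) (a b : 𝒳) (c d : 𝒴) : ℝ :=
  (Real.log (W a d) + Real.log (W b c)) - (Real.log (W a c) + Real.log (W b d))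

def sig2 (P : 𝒳 → ℝ) (W : 𝒳 → 𝒴 → ℝ) : ℝ :=
  ∑ a, ∑ b, ∑ c, ∑ d, gam P W a b c d * (lamf W a b c d) ^ 2

omit [Fintype 𝒳] [Fintype 𝒴] in
lemma gam_nonneg (P : 𝒳 → ℝ) (W : 𝒳 → 𝒴 → ℝ) (hP : ∀ a, 0 ≤ P a) (a b : 𝒳) (c d : 𝒴) :
    0 ≤ gam P W a b c d := by
  unfold gam
  have := hP a; have := hP b; positivity

omit [Fintype 𝒳] [Fintype 𝒴] in
lemma gam_symm (P : 𝒳 → ℝ) (W : 𝒳 → 𝒴 → ℝ) (a b : 𝒳) (c d : 𝒴) :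
    gam P W a b d c = gam P W a b c d := by
  unfold gam; congr 1; congr 1; ring

omit [Fintype 𝒳] [Fintype 𝒴] in
lemma lam_swap (W : 𝒳 → 𝒴 → ℝ) (a b : 𝒳) (c d : 𝒴) :
    lamf W a b d c = - lamf W a b c d := by
  unfold lamf; ring

lemma sum_gam (P : 𝒳 → ℝ) (W : 𝒳 → 𝒴 → ℝ) (hW0 : ∀ a c, 0 ≤ W a c) :
    ∑ a, ∑ b, ∑ c, ∑ d, gam P W a b c d = Zc P W := by
  rw [Zc, Fintype.sum_prod_type]
  refine Finset.sum_congr rfl (fun a _ => Finset.sum_congr rfl (fun b _ => ?_))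
  have key : ∀ c d : 𝒴, gam P W a b c d
      = P a * P b * (Real.sqrt (W a c * W b c) * Real.sqrt (W a d * W b d)) := by
    intro c d
    rw [gam, ← Real.sqrt_mul (by have := hW0 a c; have := hW0 b c; positivity)]
    congr 2; ring
  simp only [key]
  have : (Bsum W a b) ^ 2
      = (∑ c, Real.sqrt (W a c * W b c)) * (∑ d, Real.sqrt (W a d * W b d)) := by
    rw [Bsum]; ring
  rw [this, Finset.sum_mul_sum]
  simp only [Finset.mul_sum]

lemma sum_gam_lam (P : 𝒳 → ℝ) (W : 𝒳 → 𝒴 → ℝ) :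
    ∑ a, ∑ b, ∑ c, ∑ d, gam P W a b c d * lamf W a b c d = 0 := by
  have inner : ∀ a b : 𝒳, ∑ c, ∑ d, gam P W a b c d * lamf W a b c d = 0 := by
    intro a b
    have h : (∑ c, ∑ d, gam P W a b c d * lamf W a b c d)
        = ∑ c, ∑ d, gam P W a b d c * lamf W a b d c := Finset.sum_comm
    have h2 : (∑ c, ∑ d, gam P W a b d c * lamf W a b d c)
        = - ∑ c, ∑ d, gam P W a b c d * lamf W a b c d := by
      rw [← Finset.sum_neg_distrib]
      refine Finset.sum_congr rfl (fun c _ => ?_)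
      rw [← Finset.sum_neg_distrib]
      refine Finset.sum_congr rfl (fun d _ => ?_)
      rw [gam_symm, lam_swap]; ring
    rw [h2] at h
    linarith
  simp only [inner, Finset.sum_const_zero]

lemma Zc_pos (P : 𝒳 → ℝ) (W : 𝒳 → 𝒴 → ℝ) (hne : Nonempty 𝒳)
    (hPpos : ∀ x, 0 < P x) (hfin : ∀ a b : 𝒳, 0 < Bsum W a b) : 0 < Zc P W := by
  have : Nonempty (𝒳 × 𝒳) := inferInstance
  exact Finset.sum_pos (fun p _ => by
    have h1 := hPpos p.1; have h2 := hPpos p.2; have h3 := hfin p.1 p.2; positivity)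
    Finset.univ_nonempty

lemma psi2_eq (P : 𝒳 → ℝ) (W : 𝒳 → 𝒴 → ℝ)
    (hPpos : ∀ x, 0 < P x) (hfin : ∀ a b : 𝒳, 0 < Bsum W a b) (hZ : 0 < Zc P W) :
    psi2 P W = -(1/2) * Real.log (Zc P W) := by
  set Z := Zc P W with hZdef
  set Qs : 𝒳 × 𝒳 → ℝ := fun p => P p.1 * P p.2 * (Bsum W p.1 p.2) ^ 2 / Z with hQsdef
  have hQspos : ∀ p, 0 < Qs p := fun p => by
    have h1 := hPpos p.1; have h2 := hPpos p.2; have h3 := hfin p.1 p.2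
    positivity
  have hQssum : ∑ p, Qs p = 1 := by
    rw [← Finset.sum_div]; exact div_self hZ.ne'
  have hQs_pmf : IsPMF Qs := ⟨fun p => (hQspos p).le, hQssum⟩
  have key : ∀ Q : 𝒳 × 𝒳 → ℝ, IsPMF Q →
      klD Q (fun p => P p.1 * P p.2) + 2 * dQ W Q
        = (∑ p, Q p * Real.log (Q p / Qs p)) - Real.log Z := by
    intro Q hQ
    have hterm : ∀ p : 𝒳 × 𝒳,
        Q p * Real.log (Q p / (P p.1 * P p.2)) + 2 * (Q p * bhat W p.1 p.2)
          = Q p * Real.log (Q p / Qs p) - Q p * Real.log Z := by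
      intro p
      rcases eq_or_lt_of_le (hQ.1 p) with h0 | hpos
      · simp [← h0]
      · have hB := hfin p.1 p.2
        have hP1 := hPpos p.1; have hP2 := hPpos p.2
        have hbhat : bhat W p.1 p.2 = - Real.log (Bsum W p.1 p.2) := rfl
        have hQsval : Qs p = P p.1 * P p.2 * (Bsum W p.1 p.2) ^ 2 / Z := rfl
        rw [hbhat, hQsval]
        rw [Real.log_div hpos.ne' (by positivity),
            Real.log_div hpos.ne' (by positivity),
            Real.log_div (by positivity) hZ.ne',
            Real.log_mul (mul_ne_zero hP1.ne' hP2.ne') (pow_ne_zero 2 hB.ne'),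
            Real.log_mul hP1.ne' hP2.ne', Real.log_pow]
        push_cast
        ring
    rw [klD, dQ, Finset.mul_sum, ← Finset.sum_add_distrib]
    simp only [hterm]
    rw [Finset.sum_sub_distrib, ← Finset.sum_mul, hQ.2, one_mul]
  have hval : (1/2) * klD Qs (fun p => P p.1 * P p.2) + dQ W Qs = -(1/2) * Real.log Z := by
    have h := key Qs hQs_pmf
    have hkl0 : (∑ p, Qs p * Real.log (Qs p / Qs p)) = 0 := by
      refine Finset.sum_eq_zero (fun p _ => ?_)
      rw [div_self (hQspos p).ne', Real.log_one, mul_zero]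
    rw [hkl0] at h
    linarith
  have hlb : ∀ v ∈ { v : ℝ | ∃ Q : 𝒳 × 𝒳 → ℝ, IsPMF Q ∧
      v = (1/2) * klD Q (fun p => P p.1 * P p.2) + dQ W Q },
      -(1/2) * Real.log Z ≤ v := by
    rintro v ⟨Q, hQ, rfl⟩
    have h := key Q hQ
    have hnn := klNonneg Q Qs hQ.1 hQ.2 hQspos hQssum
    linarith
  exact le_antisymm (csInf_le ⟨_, hlb⟩ ⟨Qs, hQs_pmf, hval.symm⟩)
    (le_csInf ⟨_, Qs, hQs_pmf, hval.symm⟩ hlb)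

/-- The product of `gam` along coordinates. -/
lemma prod_gam (P : 𝒳 → ℝ) (W : 𝒳 → 𝒴 → ℝ) (hW0 : ∀ a c, 0 ≤ W a c) {L : ℕ}
    (x₁ x₂ : Fin L → 𝒳) (y₁ y₂ : Fin L → 𝒴) :
    (∏ j, gam P W (x₁ j) (x₂ j) (y₁ j) (y₂ j))
      = (∏ j, P (x₁ j)) * (∏ j, P (x₂ j)) *
        Real.sqrt (((∏ j, W (x₁ j) (y₁ j)) * (∏ j, W (x₂ j) (y₂ j))) *
          ((∏ j, W (x₁ j) (y₂ j)) * (∏ j, W (x₂ j) (y₁ j)))) := by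
  unfold gam
  rw [Finset.prod_mul_distrib, Finset.prod_mul_distrib]
  congr 1
  rw [← sqrtProd _ _ (fun j => by
    have h1 := hW0 (x₁ j) (y₁ j); have h2 := hW0 (x₂ j) (y₂ j)
    have h3 := hW0 (x₁ j) (y₂ j); have h4 := hW0 (x₂ j) (y₁ j); positivity)]
  congr 1
  rw [Finset.prod_mul_distrib, Finset.prod_mul_distrib, Finset.prod_mul_distrib]

/-- Upper bound: `P[Ẽ] ≤ Z^L`. -/
lemma etilde_le (P : 𝒳 → ℝ) (W : 𝒳 → 𝒴 → ℝ)
    (hP0 : ∀ a, 0 ≤ P a) (hW0 : ∀ a c, 0 ≤ W a c) (L : ℕ) :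
    probEtilde P W L ≤ Zc P W ^ L := by
  rw [← sum_gam P W hW0, ← sum4c (fun a b c d => gam P W a b c d), probEtilde]
  refine Finset.sum_le_sum (fun x₁ _ => Finset.sum_le_sum (fun x₂ _ =>
    Finset.sum_le_sum (fun y₁ _ => Finset.sum_le_sum (fun y₂ _ => ?_))))
  rw [prod_gam P W hW0]
  set p1 := ∏ j, P (x₁ j) with hp1
  set p2 := ∏ j, P (x₂ j) with hp2
  set B1 := ∏ j, W (x₁ j) (y₁ j) with hB1
  set B2 := ∏ j, W (x₂ j) (y₂ j) with hB2
  set A1 := ∏ j, W (x₁ j) (y₂ j) with hA1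
  set A2 := ∏ j, W (x₂ j) (y₁ j) with hA2
  have hp1n : 0 ≤ p1 := Finset.prod_nonneg (fun j _ => hP0 _)
  have hp2n : 0 ≤ p2 := Finset.prod_nonneg (fun j _ => hP0 _)
  have hB1n : 0 ≤ B1 := Finset.prod_nonneg (fun j _ => hW0 _ _)
  have hB2n : 0 ≤ B2 := Finset.prod_nonneg (fun j _ => hW0 _ _)
  have hA1n : 0 ≤ A1 := Finset.prod_nonneg (fun j _ => hW0 _ _)
  have hA2n : 0 ≤ A2 := Finset.prod_nonneg (fun j _ => hW0 _ _)
  by_cases h : B1 * B2 ≤ A1 * A2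
  · rw [if_pos h, mul_one]
    have h1 : B1 * B2 ≤ Real.sqrt ((B1 * B2) * (A1 * A2)) := by
      have : (B1 * B2) * (B1 * B2) ≤ (B1 * B2) * (A1 * A2) :=
        mul_le_mul_of_nonneg_left h (by positivity)
      calc B1 * B2 = Real.sqrt ((B1 * B2) * (B1 * B2)) :=
            (Real.sqrt_mul_self (mul_nonneg hB1n hB2n)).symm
        _ ≤ _ := Real.sqrt_le_sqrt this
    calc p1 * p2 * B1 * B2 = p1 * p2 * (B1 * B2) := by ring
      _ ≤ p1 * p2 * Real.sqrt ((B1 * B2) * (A1 * A2)) :=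
          mul_le_mul_of_nonneg_left h1 (by positivity)
  · rw [if_neg h, mul_zero]
    positivity

/-- Splitting: `P[Ẽ] = P[E] + (∑ P²)^L`. -/
lemma etilde_split (P : 𝒳 → ℝ) (W : 𝒳 → 𝒴 → ℝ)
    (hW1 : ∀ a, ∑ c, W a c = 1) (L : ℕ) :
    probEtilde P W L = probE P W L + (∑ x, P x ^ 2) ^ L := by
  have hterm : ∀ (x₁ x₂ : Fin L → 𝒳) (y₁ y₂ : Fin L → 𝒴),
      (∏ j, P (x₁ j)) * (∏ j, P (x₂ j)) *
        (∏ j, W (x₁ j) (y₁ j)) * (∏ j, W (x₂ j) (y₂ j)) *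
        (if (∏ j, W (x₁ j) (y₁ j)) * (∏ j, W (x₂ j) (y₂ j)) ≤
            (∏ j, W (x₁ j) (y₂ j)) * (∏ j, W (x₂ j) (y₁ j)) then 1 else 0)
      = (∏ j, P (x₁ j)) * (∏ j, P (x₂ j)) *
        (∏ j, W (x₁ j) (y₁ j)) * (∏ j, W (x₂ j) (y₂ j)) *
        (if ((∏ j, W (x₁ j) (y₁ j)) * (∏ j, W (x₂ j) (y₂ j)) ≤
            (∏ j, W (x₁ j) (y₂ j)) * (∏ j, W (x₂ j) (y₁ j))) ∧ x₁ ≠ x₂ then 1 else 0)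
        + (if x₁ = x₂ then
            (∏ j, P (x₁ j)) * (∏ j, P (x₂ j)) *
            (∏ j, W (x₁ j) (y₁ j)) * (∏ j, W (x₂ j) (y₂ j)) else 0) := by
    intro x₁ x₂ y₁ y₂
    by_cases hx : x₁ = x₂
    · subst hx
      have hcond : (∏ j, W (x₁ j) (y₁ j)) * (∏ j, W (x₁ j) (y₂ j)) ≤
          (∏ j, W (x₁ j) (y₂ j)) * (∏ j, W (x₁ j) (y₁ j)) := le_of_eq (mul_comm _ _)
      rw [if_pos hcond, if_neg (fun h => h.2 rfl), if_pos rfl]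
      ring
    · simp [hx]
  rw [probEtilde, probE]
  simp only [hterm, Finset.sum_add_distrib]
  congr 1
  -- diagonal term
  have hdiag1 : ∀ (x₁ : Fin L → 𝒳) (y₁ y₂ : Fin L → 𝒴),
      (∑ x₂ : Fin L → 𝒳, if x₁ = x₂ then
          (∏ j, P (x₁ j)) * (∏ j, P (x₂ j)) *
          (∏ j, W (x₁ j) (y₁ j)) * (∏ j, W (x₂ j) (y₂ j)) else 0)
      = (∏ j, P (x₁ j)) * (∏ j, P (x₁ j)) *
          (∏ j, W (x₁ j) (y₁ j)) * (∏ j, W (x₁ j) (y₂ j)) := by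
    intro x₁ y₁ y₂
    rw [Finset.sum_ite_eq]
    simp
  -- reorder sums: ∑x₁ ∑x₂ ∑y₁ ∑y₂ → use hdiag1 after commuting x₂ inward
  have hcomm : ∀ (x₁ : Fin L → 𝒳),
      (∑ x₂ : Fin L → 𝒳, ∑ y₁ : Fin L → 𝒴, ∑ y₂ : Fin L → 𝒴,
        if x₁ = x₂ then
          (∏ j, P (x₁ j)) * (∏ j, P (x₂ j)) *
          (∏ j, W (x₁ j) (y₁ j)) * (∏ j, W (x₂ j) (y₂ j)) else 0)
      = ∑ y₁ : Fin L → 𝒴, ∑ y₂ : Fin L → 𝒴,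
          (∏ j, P (x₁ j)) * (∏ j, P (x₁ j)) *
          (∏ j, W (x₁ j) (y₁ j)) * (∏ j, W (x₁ j) (y₂ j)) := by
    intro x₁
    rw [Finset.sum_comm]
    refine Finset.sum_congr rfl (fun y₁ _ => ?_)
    rw [Finset.sum_comm]
    refine Finset.sum_congr rfl (fun y₂ _ => ?_)
    exact hdiag1 x₁ y₁ y₂
  simp only [hcomm]
  have hprod : ∀ (x₁ : Fin L → 𝒳) (y₁ y₂ : Fin L → 𝒴),
      (∏ j, P (x₁ j)) * (∏ j, P (x₁ j)) *
        (∏ j, W (x₁ j) (y₁ j)) * (∏ j, W (x₁ j) (y₂ j))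
      = ∏ j, (P (x₁ j) * P (x₁ j) * (W (x₁ j) (y₁ j) * W (x₁ j) (y₂ j))) := by
    intro x₁ y₁ y₂
    rw [Finset.prod_mul_distrib, Finset.prod_mul_distrib, Finset.prod_mul_distrib]
    ring
  simp only [hprod]
  rw [sum3 (fun a c d => P a * P a * (W a c * W a d))]
  congr 1
  refine Finset.sum_congr rfl (fun a _ => ?_)
  have : ∑ c, ∑ d, P a * P a * (W a c * W a d)
      = P a * P a * ((∑ c, W a c) * (∑ d, W a d)) := by
    rw [Finset.sum_mul_sum]
    simp only [Finset.mul_sum]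
  rw [this, hW1 a]
  ring

/-- Symmetry lower bound: the tilted mass of the event `{B ≤ A}` is at least `Z^L/2`. -/
lemma half_bound (P : 𝒳 → ℝ) (W : 𝒳 → 𝒴 → ℝ)
    (hP0 : ∀ a, 0 ≤ P a) (hW0 : ∀ a c, 0 ≤ W a c) (L : ℕ) :
    Zc P W ^ L / 2 ≤ ∑ x₁ : Fin L → 𝒳, ∑ x₂ : Fin L → 𝒳, ∑ y₁ : Fin L → 𝒴, ∑ y₂ : Fin L → 𝒴,
      (∏ j, gam P W (x₁ j) (x₂ j) (y₁ j) (y₂ j)) *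
      (if (∏ j, W (x₁ j) (y₁ j)) * (∏ j, W (x₂ j) (y₂ j)) ≤
          (∏ j, W (x₁ j) (y₂ j)) * (∏ j, W (x₂ j) (y₁ j)) then 1 else 0) := by
  set S := ∑ x₁ : Fin L → 𝒳, ∑ x₂ : Fin L → 𝒳, ∑ y₁ : Fin L → 𝒴, ∑ y₂ : Fin L → 𝒴,
      (∏ j, gam P W (x₁ j) (x₂ j) (y₁ j) (y₂ j)) *
      (if (∏ j, W (x₁ j) (y₁ j)) * (∏ j, W (x₂ j) (y₂ j)) ≤
          (∏ j, W (x₁ j) (y₂ j)) * (∏ j, W (x₂ j) (y₁ j)) then 1 else 0) with hS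
  have hswap : S = ∑ x₁ : Fin L → 𝒳, ∑ x₂ : Fin L → 𝒳, ∑ y₁ : Fin L → 𝒴, ∑ y₂ : Fin L → 𝒴,
      (∏ j, gam P W (x₁ j) (x₂ j) (y₁ j) (y₂ j)) *
      (if (∏ j, W (x₁ j) (y₂ j)) * (∏ j, W (x₂ j) (y₁ j)) ≤
          (∏ j, W (x₁ j) (y₁ j)) * (∏ j, W (x₂ j) (y₂ j)) then 1 else 0) := by
    rw [hS]
    refine Finset.sum_congr rfl (fun x₁ _ => Finset.sum_congr rfl (fun x₂ _ => ?_))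
    rw [Finset.sum_comm]
    refine Finset.sum_congr rfl (fun y₁ _ => Finset.sum_congr rfl (fun y₂ _ => ?_))
    congr 1
    exact Finset.prod_congr rfl (fun k _ => gam_symm P W _ _ _ _)
  have htot : Zc P W ^ L ≤ S + S := by
    nth_rewrite 2 [hswap]
    rw [← sum_gam P W hW0, ← sum4c (fun a b c d => gam P W a b c d), hS]
    simp only [← Finset.sum_add_distrib]
    refine Finset.sum_le_sum (fun x₁ _ => Finset.sum_le_sum (fun x₂ _ =>
      Finset.sum_le_sum (fun y₁ _ => Finset.sum_le_sum (fun y₂ _ => ?_))))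
    have hg : 0 ≤ ∏ j, gam P W (x₁ j) (x₂ j) (y₁ j) (y₂ j) :=
      Finset.prod_nonneg (fun k _ => gam_nonneg P W hP0 _ _ _ _)
    rcases le_total ((∏ j, W (x₁ j) (y₁ j)) * (∏ j, W (x₂ j) (y₂ j)))
      ((∏ j, W (x₁ j) (y₂ j)) * (∏ j, W (x₂ j) (y₁ j))) with h | h
    · rw [if_pos h]
      have : (0:ℝ) ≤ (∏ j, gam P W (x₁ j) (x₂ j) (y₁ j) (y₂ j)) *
          (if (∏ j, W (x₁ j) (y₂ j)) * (∏ j, W (x₂ j) (y₁ j)) ≤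
            (∏ j, W (x₁ j) (y₁ j)) * (∏ j, W (x₂ j) (y₂ j)) then 1 else 0) := by
        split <;> simp [hg]
      linarith
    · rw [if_pos h]
      have : (0:ℝ) ≤ (∏ j, gam P W (x₁ j) (x₂ j) (y₁ j) (y₂ j)) *
          (if (∏ j, W (x₁ j) (y₁ j)) * (∏ j, W (x₂ j) (y₂ j)) ≤
            (∏ j, W (x₁ j) (y₂ j)) * (∏ j, W (x₂ j) (y₁ j)) then 1 else 0) := by
        split <;> simp [hg]
      linarith
  linarith

/-- Second moment of the log-likelihood ratio under the tilted measure, per pair. -/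
lemma sum_gam_lamlam (P : 𝒳 → ℝ) (W : 𝒳 → 𝒴 → ℝ) (hW0 : ∀ a c, 0 ≤ W a c)
    {L : ℕ} (i j : Fin L) :
    (∑ x₁ : Fin L → 𝒳, ∑ x₂ : Fin L → 𝒳, ∑ y₁ : Fin L → 𝒴, ∑ y₂ : Fin L → 𝒴,
      (∏ k, gam P W (x₁ k) (x₂ k) (y₁ k) (y₂ k)) *
        (lamf W (x₁ i) (x₂ i) (y₁ i) (y₂ i) * lamf W (x₁ j) (x₂ j) (y₁ j) (y₂ j)))
    = if i = j then sig2 P W * Zc P W ^ (L - 1) else 0 := by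
  set g : Fin L → 𝒳 → 𝒳 → 𝒴 → 𝒴 → ℝ := fun k a b c d =>
    gam P W a b c d * ((if k = i then lamf W a b c d else 1) *
      (if k = j then lamf W a b c d else 1)) with hg
  have hterm : ∀ (x₁ x₂ : Fin L → 𝒳) (y₁ y₂ : Fin L → 𝒴),
      (∏ k, gam P W (x₁ k) (x₂ k) (y₁ k) (y₂ k)) *
        (lamf W (x₁ i) (x₂ i) (y₁ i) (y₂ i) * lamf W (x₁ j) (x₂ j) (y₁ j) (y₂ j))
      = ∏ k, g k (x₁ k) (x₂ k) (y₁ k) (y₂ k) := by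
    intro x₁ x₂ y₁ y₂
    simp only [hg]
    rw [Finset.prod_mul_distrib, Finset.prod_mul_distrib,
      Finset.prod_ite_eq' Finset.univ i (fun k => lamf W (x₁ k) (x₂ k) (y₁ k) (y₂ k)),
      Finset.prod_ite_eq' Finset.univ j (fun k => lamf W (x₁ k) (x₂ k) (y₁ k) (y₂ k))]
    simp
  simp only [hterm]
  rw [sum4 g]
  by_cases hij : i = j
  · subst hij
    have hval : ∀ k, (∑ a, ∑ b, ∑ c, ∑ d, g k a b c d)
        = if k = i then sig2 P W else Zc P W := by
      intro k
      by_cases hk : k = i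
      · subst hk
        rw [if_pos rfl]
        have h1 : ∀ (a b : 𝒳) (c d : 𝒴), g k a b c d
            = gam P W a b c d * (lamf W a b c d) ^ 2 := by
          intro a b c d; simp only [hg, eq_self_iff_true, if_true]; ring
        simp only [h1]
        rfl
      · rw [if_neg hk]
        have h1 : ∀ (a b : 𝒳) (c d : 𝒴), g k a b c d = gam P W a b c d := by
          intro a b c d; simp only [hg, if_neg hk]; ring
        simp only [h1]
        exact sum_gam P W hW0
    simp only [hval]
    rw [← Finset.mul_prod_erase Finset.univ
      (fun k => if k = i then sig2 P W else Zc P W) (Finset.mem_univ i)]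
    simp only [eq_self_iff_true, if_true]
    congr 1
    rw [Finset.prod_congr rfl (fun k hk => if_neg (Finset.ne_of_mem_erase hk)),
      Finset.prod_const, Finset.card_erase_of_mem (Finset.mem_univ i),
      Finset.card_univ, Fintype.card_fin]
  · rw [if_neg hij]
    apply Finset.prod_eq_zero (Finset.mem_univ i)
    have h1 : ∀ (a b : 𝒳) (c d : 𝒴), g i a b c d = gam P W a b c d * lamf W a b c d := by
      intro a b c d; simp only [hg, if_neg hij, eq_self_iff_true, if_true]; ring
    simp only [h1]
    exact sum_gam_lam P W

lemma pos_parts {x y : ℝ} (hx : 0 ≤ x) (hy : 0 ≤ y) (h : 0 < x * y) : 0 < x ∧ 0 < y := by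
  constructor
  · rcases eq_or_lt_of_le hx with h0 | h0
    · rw [← h0, zero_mul] at h; exact absurd h (lt_irrefl 0)
    · exact h0
  · rcases eq_or_lt_of_le hy with h0 | h0
    · rw [← h0, mul_zero] at h; exact absurd h (lt_irrefl 0)
    · exact h0

lemma sum_gam_lamsq (P : 𝒳 → ℝ) (W : 𝒳 → 𝒴 → ℝ) (hW0 : ∀ a c, 0 ≤ W a c) (L : ℕ) :
    (∑ x₁ : Fin L → 𝒳, ∑ x₂ : Fin L → 𝒳, ∑ y₁ : Fin L → 𝒴, ∑ y₂ : Fin L → 𝒴,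
      (∏ k, gam P W (x₁ k) (x₂ k) (y₁ k) (y₂ k)) *
        (∑ i, lamf W (x₁ i) (x₂ i) (y₁ i) (y₂ i)) ^ 2)
    = L * (sig2 P W * Zc P W ^ (L - 1)) := by
  have hsq : ∀ (x₁ x₂ : Fin L → 𝒳) (y₁ y₂ : Fin L → 𝒴),
      (∏ k, gam P W (x₁ k) (x₂ k) (y₁ k) (y₂ k)) *
        (∑ i, lamf W (x₁ i) (x₂ i) (y₁ i) (y₂ i)) ^ 2
      = ∑ i, ∑ j, (∏ k, gam P W (x₁ k) (x₂ k) (y₁ k) (y₂ k)) *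
          (lamf W (x₁ i) (x₂ i) (y₁ i) (y₂ i) * lamf W (x₁ j) (x₂ j) (y₁ j) (y₂ j)) := by
    intro x₁ x₂ y₁ y₂
    rw [sq, Finset.sum_mul_sum, Finset.mul_sum]
    refine Finset.sum_congr rfl fun i _ => ?_
    rw [Finset.mul_sum]
  simp only [hsq]
  have swY : ∀ (F : (Fin L → 𝒴) → Fin L → ℝ),
      (∑ v : Fin L → 𝒴, ∑ i, F v i) = ∑ i, ∑ v, F v i := fun F => Finset.sum_comm
  have swX : ∀ (F : (Fin L → 𝒳) → Fin L → ℝ),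
      (∑ v : Fin L → 𝒳, ∑ i, F v i) = ∑ i, ∑ v, F v i := fun F => Finset.sum_comm
  simp only [swY, swX]
  simp only [sum_gam_lamlam P W hW0]
  rw [Finset.sum_congr rfl (fun i (_ : i ∈ Finset.univ) =>
    Finset.sum_ite_eq Finset.univ i (fun _ => sig2 P W * Zc P W ^ (L - 1)))]
  simp [Finset.card_univ, mul_comm]

lemma tail_bound (P : 𝒳 → ℝ) (W : 𝒳 → 𝒴 → ℝ)
    (hP0 : ∀ a, 0 ≤ P a) (hW0 : ∀ a c, 0 ≤ W a c) {L : ℕ} {t : ℝ} (ht : 0 < t) :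
    (∑ x₁ : Fin L → 𝒳, ∑ x₂ : Fin L → 𝒳, ∑ y₁ : Fin L → 𝒴, ∑ y₂ : Fin L → 𝒴,
      (∏ k, gam P W (x₁ k) (x₂ k) (y₁ k) (y₂ k)) *
        (if Real.exp t * ((∏ j, W (x₁ j) (y₁ j)) * (∏ j, W (x₂ j) (y₂ j))) <
            (∏ j, W (x₁ j) (y₂ j)) * (∏ j, W (x₂ j) (y₁ j)) then 1 else 0))
      ≤ L * (sig2 P W * Zc P W ^ (L - 1)) / t ^ 2 := by
  rw [← sum_gam_lamsq P W hW0 L]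
  have step : ∀ (x₁ x₂ : Fin L → 𝒳) (y₁ y₂ : Fin L → 𝒴),
      (∏ k, gam P W (x₁ k) (x₂ k) (y₁ k) (y₂ k)) *
        (if Real.exp t * ((∏ j, W (x₁ j) (y₁ j)) * (∏ j, W (x₂ j) (y₂ j))) <
            (∏ j, W (x₁ j) (y₂ j)) * (∏ j, W (x₂ j) (y₁ j)) then 1 else 0)
      ≤ (∏ k, gam P W (x₁ k) (x₂ k) (y₁ k) (y₂ k)) *
          (∑ i, lamf W (x₁ i) (x₂ i) (y₁ i) (y₂ i)) ^ 2 / t ^ 2 := by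
    intro x₁ x₂ y₁ y₂
    set G := ∏ k, gam P W (x₁ k) (x₂ k) (y₁ k) (y₂ k) with hGdef
    set Λ := ∑ i, lamf W (x₁ i) (x₂ i) (y₁ i) (y₂ i) with hLdef
    have hG : 0 ≤ G := Finset.prod_nonneg (fun k _ => gam_nonneg P W hP0 _ _ _ _)
    by_cases hc : Real.exp t * ((∏ j, W (x₁ j) (y₁ j)) * (∏ j, W (x₂ j) (y₂ j))) <
        (∏ j, W (x₁ j) (y₂ j)) * (∏ j, W (x₂ j) (y₁ j))
    · rw [if_pos hc, mul_one]
      rcases eq_or_lt_of_le hG with h0 | hGpos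
      · rw [← h0]; positivity
      · have hfac : ∀ k, 0 < gam P W (x₁ k) (x₂ k) (y₁ k) (y₂ k) := by
          intro k
          rcases eq_or_lt_of_le (gam_nonneg P W hP0 (x₁ k) (x₂ k) (y₁ k) (y₂ k)) with h0 | h
          · exfalso
            rw [hGdef] at hGpos
            rw [Finset.prod_eq_zero (Finset.mem_univ k) h0.symm] at hGpos
            exact lt_irrefl 0 hGpos
          · exact h
        have hWpos : ∀ k, 0 < W (x₁ k) (y₁ k) ∧ 0 < W (x₂ k) (y₂ k) ∧
            0 < W (x₁ k) (y₂ k) ∧ 0 < W (x₂ k) (y₁ k) := by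
          intro k
          have h := hfac k
          rw [gam] at h
          have hs : 0 < Real.sqrt (W (x₁ k) (y₁ k) * W (x₂ k) (y₂ k) *
              (W (x₁ k) (y₂ k) * W (x₂ k) (y₁ k))) := by
            have h1 := Real.sqrt_nonneg (W (x₁ k) (y₁ k) * W (x₂ k) (y₂ k) *
              (W (x₁ k) (y₂ k) * W (x₂ k) (y₁ k)))
            rcases eq_or_lt_of_le h1 with h2 | h2
            · rw [← h2, mul_zero] at h; exact absurd h (lt_irrefl 0)
            · exact h2
          have hprod := Real.sqrt_pos.mp hs
          obtain ⟨h12, h34⟩ := pos_parts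
            (mul_nonneg (hW0 (x₁ k) (y₁ k)) (hW0 (x₂ k) (y₂ k)))
            (mul_nonneg (hW0 (x₁ k) (y₂ k)) (hW0 (x₂ k) (y₁ k))) hprod
          obtain ⟨hw1, hw2⟩ := pos_parts (hW0 _ _) (hW0 _ _) h12
          obtain ⟨hw3, hw4⟩ := pos_parts (hW0 _ _) (hW0 _ _) h34
          exact ⟨hw1, hw2, hw3, hw4⟩
        have hB1 : (0:ℝ) < ∏ j, W (x₁ j) (y₁ j) :=
          Finset.prod_pos (fun k _ => (hWpos k).1)
        have hB2 : (0:ℝ) < ∏ j, W (x₂ j) (y₂ j) :=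
          Finset.prod_pos (fun k _ => (hWpos k).2.1)
        have hA1 : (0:ℝ) < ∏ j, W (x₁ j) (y₂ j) :=
          Finset.prod_pos (fun k _ => (hWpos k).2.2.1)
        have hA2 : (0:ℝ) < ∏ j, W (x₂ j) (y₁ j) :=
          Finset.prod_pos (fun k _ => (hWpos k).2.2.2)
        have hLam : Λ = Real.log ((∏ j, W (x₁ j) (y₂ j)) * (∏ j, W (x₂ j) (y₁ j)))
            - Real.log ((∏ j, W (x₁ j) (y₁ j)) * (∏ j, W (x₂ j) (y₂ j))) := by
          rw [Real.log_mul hA1.ne' hA2.ne', Real.log_mul hB1.ne' hB2.ne',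
            Real.log_prod (fun k _ => (hWpos k).2.2.1.ne'),
            Real.log_prod (fun k _ => (hWpos k).2.2.2.ne'),
            Real.log_prod (fun k _ => (hWpos k).1.ne'),
            Real.log_prod (fun k _ => (hWpos k).2.1.ne'),
            hLdef]
          rw [← Finset.sum_add_distrib, ← Finset.sum_add_distrib, ← Finset.sum_sub_distrib]
          exact Finset.sum_congr rfl (fun k _ => rfl)
        have htl : t < Λ := by
          have hlt : Real.log (Real.exp t * ((∏ j, W (x₁ j) (y₁ j)) * (∏ j, W (x₂ j) (y₂ j))))
              < Real.log ((∏ j, W (x₁ j) (y₂ j)) * (∏ j, W (x₂ j) (y₁ j))) :=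
            Real.log_lt_log (by positivity) hc
          rw [Real.log_mul (Real.exp_ne_zero t) (by positivity), Real.log_exp] at hlt
          rw [hLam]; linarith
        have h1 : 1 ≤ Λ ^ 2 / t ^ 2 := by
          rw [le_div_iff₀ (by positivity), one_mul]
          nlinarith
        calc G = G * 1 := (mul_one G).symm
          _ ≤ G * (Λ ^ 2 / t ^ 2) := mul_le_mul_of_nonneg_left h1 hGpos.le
          _ = G * Λ ^ 2 / t ^ 2 := by ring
    · rw [if_neg hc, mul_zero]
      positivity
  calc (∑ x₁ : Fin L → 𝒳, ∑ x₂ : Fin L → 𝒳, ∑ y₁ : Fin L → 𝒴, ∑ y₂ : Fin L → 𝒴,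
      (∏ k, gam P W (x₁ k) (x₂ k) (y₁ k) (y₂ k)) *
        (if Real.exp t * ((∏ j, W (x₁ j) (y₁ j)) * (∏ j, W (x₂ j) (y₂ j))) <
            (∏ j, W (x₁ j) (y₂ j)) * (∏ j, W (x₂ j) (y₁ j)) then 1 else 0))
      ≤ ∑ x₁ : Fin L → 𝒳, ∑ x₂ : Fin L → 𝒳, ∑ y₁ : Fin L → 𝒴, ∑ y₂ : Fin L → 𝒴,
        (∏ k, gam P W (x₁ k) (x₂ k) (y₁ k) (y₂ k)) *
          (∑ i, lamf W (x₁ i) (x₂ i) (y₁ i) (y₂ i)) ^ 2 / t ^ 2 :=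
      Finset.sum_le_sum (fun x₁ _ => Finset.sum_le_sum (fun x₂ _ =>
        Finset.sum_le_sum (fun y₁ _ => Finset.sum_le_sum (fun y₂ _ => step x₁ x₂ y₁ y₂))))
    _ = (∑ x₁ : Fin L → 𝒳, ∑ x₂ : Fin L → 𝒳, ∑ y₁ : Fin L → 𝒴, ∑ y₂ : Fin L → 𝒴,
        (∏ k, gam P W (x₁ k) (x₂ k) (y₁ k) (y₂ k)) *
          (∑ i, lamf W (x₁ i) (x₂ i) (y₁ i) (y₂ i)) ^ 2) / t ^ 2 := by
      simp only [← Finset.sum_div]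

lemma etilde_band (P : 𝒳 → ℝ) (W : 𝒳 → 𝒴 → ℝ)
    (hP0 : ∀ a, 0 ≤ P a) (hW0 : ∀ a c, 0 ≤ W a c) {L : ℕ} {t : ℝ} (ht : 0 < t) :
    Real.exp (-(t/2)) * (Zc P W ^ L / 2 - L * (sig2 P W * Zc P W ^ (L - 1)) / t ^ 2)
      ≤ probEtilde P W L := by
  set S1 := ∑ x₁ : Fin L → 𝒳, ∑ x₂ : Fin L → 𝒳, ∑ y₁ : Fin L → 𝒴, ∑ y₂ : Fin L → 𝒴,
      (∏ j, gam P W (x₁ j) (x₂ j) (y₁ j) (y₂ j)) *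
      (if (∏ j, W (x₁ j) (y₁ j)) * (∏ j, W (x₂ j) (y₂ j)) ≤
          (∏ j, W (x₁ j) (y₂ j)) * (∏ j, W (x₂ j) (y₁ j)) then 1 else 0) with hS1
  set S2 := ∑ x₁ : Fin L → 𝒳, ∑ x₂ : Fin L → 𝒳, ∑ y₁ : Fin L → 𝒴, ∑ y₂ : Fin L → 𝒴,
      (∏ j, gam P W (x₁ j) (x₂ j) (y₁ j) (y₂ j)) *
        (if Real.exp t * ((∏ j, W (x₁ j) (y₁ j)) * (∏ j, W (x₂ j) (y₂ j))) <
            (∏ j, W (x₁ j) (y₂ j)) * (∏ j, W (x₂ j) (y₁ j)) then 1 else 0) with hS2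
  set S3 := ∑ x₁ : Fin L → 𝒳, ∑ x₂ : Fin L → 𝒳, ∑ y₁ : Fin L → 𝒴, ∑ y₂ : Fin L → 𝒴,
      (∏ j, gam P W (x₁ j) (x₂ j) (y₁ j) (y₂ j)) *
      (if ((∏ j, W (x₁ j) (y₁ j)) * (∏ j, W (x₂ j) (y₂ j)) ≤
          (∏ j, W (x₁ j) (y₂ j)) * (∏ j, W (x₂ j) (y₁ j)))
        ∧ ((∏ j, W (x₁ j) (y₂ j)) * (∏ j, W (x₂ j) (y₁ j)) ≤
          Real.exp t * ((∏ j, W (x₁ j) (y₁ j)) * (∏ j, W (x₂ j) (y₂ j)))) then 1 else 0)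
      with hS3
  have hstep1 : S1 - S2 ≤ S3 := by
    rw [hS1, hS2, hS3]
    simp only [← Finset.sum_sub_distrib]
    refine Finset.sum_le_sum (fun x₁ _ => Finset.sum_le_sum (fun x₂ _ =>
      Finset.sum_le_sum (fun y₁ _ => Finset.sum_le_sum (fun y₂ _ => ?_))))
    have hG : 0 ≤ ∏ j, gam P W (x₁ j) (x₂ j) (y₁ j) (y₂ j) :=
      Finset.prod_nonneg (fun k _ => gam_nonneg P W hP0 _ _ _ _)
    by_cases h1 : (∏ j, W (x₁ j) (y₁ j)) * (∏ j, W (x₂ j) (y₂ j)) ≤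
        (∏ j, W (x₁ j) (y₂ j)) * (∏ j, W (x₂ j) (y₁ j))
    · by_cases h2 : (∏ j, W (x₁ j) (y₂ j)) * (∏ j, W (x₂ j) (y₁ j)) ≤
          Real.exp t * ((∏ j, W (x₁ j) (y₁ j)) * (∏ j, W (x₂ j) (y₂ j)))
      · rw [if_pos h1, if_neg (not_lt.mpr h2), if_pos ⟨h1, h2⟩]
        simp
      · rw [if_pos h1, if_pos (not_le.mp h2), if_neg (fun h => h2 h.2)]
        simp
    · have hnot : ¬(((∏ j, W (x₁ j) (y₁ j)) * (∏ j, W (x₂ j) (y₂ j)) ≤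
            (∏ j, W (x₁ j) (y₂ j)) * (∏ j, W (x₂ j) (y₁ j)))
          ∧ ((∏ j, W (x₁ j) (y₂ j)) * (∏ j, W (x₂ j) (y₁ j)) ≤
            Real.exp t * ((∏ j, W (x₁ j) (y₁ j)) * (∏ j, W (x₂ j) (y₂ j))))) :=
        fun h => h1 h.1
      rw [if_neg h1, if_neg hnot, mul_zero, zero_sub]
      have : (0:ℝ) ≤ (∏ j, gam P W (x₁ j) (x₂ j) (y₁ j) (y₂ j)) *
          (if Real.exp t * ((∏ j, W (x₁ j) (y₁ j)) * (∏ j, W (x₂ j) (y₂ j))) <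
            (∏ j, W (x₁ j) (y₂ j)) * (∏ j, W (x₂ j) (y₁ j)) then 1 else 0) := by
        split <;> simp [hG]
      linarith
  have hstep2 : Real.exp (-(t/2)) * S3 ≤ probEtilde P W L := by
    rw [hS3, probEtilde]
    simp only [Finset.mul_sum]
    refine Finset.sum_le_sum (fun x₁ _ => Finset.sum_le_sum (fun x₂ _ =>
      Finset.sum_le_sum (fun y₁ _ => Finset.sum_le_sum (fun y₂ _ => ?_))))
    set B1 := ∏ j, W (x₁ j) (y₁ j) with hB1
    set B2 := ∏ j, W (x₂ j) (y₂ j) with hB2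
    set A1 := ∏ j, W (x₁ j) (y₂ j) with hA1
    set A2 := ∏ j, W (x₂ j) (y₁ j) with hA2
    have hB1n : 0 ≤ B1 := Finset.prod_nonneg (fun j _ => hW0 _ _)
    have hB2n : 0 ≤ B2 := Finset.prod_nonneg (fun j _ => hW0 _ _)
    have hA1n : 0 ≤ A1 := Finset.prod_nonneg (fun j _ => hW0 _ _)
    have hA2n : 0 ≤ A2 := Finset.prod_nonneg (fun j _ => hW0 _ _)
    have hp1n : 0 ≤ ∏ j, P (x₁ j) := Finset.prod_nonneg (fun j _ => hP0 _)
    have hp2n : 0 ≤ ∏ j, P (x₂ j) := Finset.prod_nonneg (fun j _ => hP0 _)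
    by_cases h : (B1 * B2 ≤ A1 * A2) ∧ (A1 * A2 ≤ Real.exp t * (B1 * B2))
    · rw [if_pos h, if_pos h.1, mul_one, mul_one, prod_gam P W hW0]
      have hsq : Real.exp (t/2) ^ 2 = Real.exp t := by
        rw [← Real.exp_nat_mul]; push_cast; ring_nf
      have hs : Real.sqrt ((B1 * B2) * (A1 * A2)) ≤ Real.exp (t/2) * (B1 * B2) := by
        have hle : (B1 * B2) * (A1 * A2) ≤ (Real.exp (t/2) * (B1 * B2)) ^ 2 := by
          have h2 := h.2
          have : (B1 * B2) * (A1 * A2) ≤ (B1 * B2) * (Real.exp t * (B1 * B2)) :=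
            mul_le_mul_of_nonneg_left h2 (by positivity)
          calc (B1 * B2) * (A1 * A2) ≤ (B1 * B2) * (Real.exp t * (B1 * B2)) := this
            _ = (Real.exp (t/2) * (B1 * B2)) ^ 2 := by rw [mul_pow, hsq]; ring
        calc Real.sqrt ((B1 * B2) * (A1 * A2))
            ≤ Real.sqrt ((Real.exp (t/2) * (B1 * B2)) ^ 2) := Real.sqrt_le_sqrt hle
          _ = Real.exp (t/2) * (B1 * B2) := Real.sqrt_sq (by positivity)
      have hones : Real.exp (-(t/2)) * Real.exp (t/2) = 1 := by
        rw [← Real.exp_add]; norm_num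
      calc Real.exp (-(t/2)) * ((∏ j, P (x₁ j)) * (∏ j, P (x₂ j)) *
            Real.sqrt ((B1 * B2) * (A1 * A2)))
          ≤ Real.exp (-(t/2)) * ((∏ j, P (x₁ j)) * (∏ j, P (x₂ j)) *
            (Real.exp (t/2) * (B1 * B2))) := by
            apply mul_le_mul_of_nonneg_left _ (Real.exp_pos _).le
            apply mul_le_mul_of_nonneg_left hs (by positivity)
        _ = (Real.exp (-(t/2)) * Real.exp (t/2)) *
            ((∏ j, P (x₁ j)) * (∏ j, P (x₂ j)) * (B1 * B2)) := by ring
        _ = (∏ j, P (x₁ j)) * (∏ j, P (x₂ j)) * B1 * B2 := by rw [hones]; ring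
    · rw [if_neg h, mul_zero, mul_zero]
      apply mul_nonneg (by positivity)
      split <;> norm_num
  have hhalf := half_bound P W hP0 hW0 L
  have htail := tail_bound P W hP0 hW0 ht (L := L)
  calc Real.exp (-(t/2)) * (Zc P W ^ L / 2 - L * (sig2 P W * Zc P W ^ (L - 1)) / t ^ 2)
      ≤ Real.exp (-(t/2)) * S3 := by
        apply mul_le_mul_of_nonneg_left _ (Real.exp_pos _).le
        have : Zc P W ^ L / 2 - L * (sig2 P W * Zc P W ^ (L - 1)) / t ^ 2 ≤ S1 - S2 := by
          have h1 : Zc P W ^ L / 2 ≤ S1 := hhalf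
          have h2 : S2 ≤ L * (sig2 P W * Zc P W ^ (L - 1)) / t ^ 2 := htail
          linarith
        linarith [hstep1]
    _ ≤ probEtilde P W L := hstep2

end Defs

set_option maxHeartbeats 2000000 in
/-- `P[E] ≤ P[Ẽ] ≤ e^{-2L·ψ₂(P_XY)}` for every `L`; and, assuming
finite Bhattacharyya distances and `2ψ₂(P_XY) < H₂(P_X)`, for every `ε > 0` and all
sufficiently large `L`, `P[E] ≥ e^{-2L·(ψ₂(P_XY)+ε)}`. -/
theorem transposition_event_bounds {𝒳 𝒴 : Type*} [Fintype 𝒳] [Fintype 𝒴]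
    (P : 𝒳 → ℝ) (W : 𝒳 → 𝒴 → ℝ)
    (hP : IsPMF P) (hPpos : ∀ x, 0 < P x) (hW : ∀ x, IsPMF (W x))
    (hfin : ∀ x₁ x₂ : 𝒳, 0 < ∑ y, Real.sqrt (W x₁ y * W x₂ y))
    (hψ : 2 * psi2 P W < renyi2 P) :
    (∀ L : ℕ, probE P W L ≤ probEtilde P W L ∧
        probEtilde P W L ≤ Real.exp (-(2 * (L : ℝ) * psi2 P W))) ∧
      ∀ ε > 0, ∃ L₀ : ℕ, ∀ L : ℕ, L₀ ≤ L →
        Real.exp (-(2 * (L : ℝ) * (psi2 P W + ε))) ≤ probE P W L := by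
  obtain ⟨hP0, hP1⟩ := hP
  have hW0 : ∀ a c, 0 ≤ W a c := fun a c => (hW a).1 c
  have hW1 : ∀ a, ∑ c, W a c = 1 := fun a => (hW a).2
  have hne : Nonempty 𝒳 := by
    by_contra h
    rw [not_nonempty_iff] at h
    rw [Finset.univ_eq_empty, Finset.sum_empty] at hP1
    norm_num at hP1
  have hBfin : ∀ a b : 𝒳, 0 < Bsum W a b := hfin
  set Z := Zc P W with hZdef
  have hZ : 0 < Z := Zc_pos P W hne hPpos hBfin
  have hpsi : psi2 P W = -(1/2) * Real.log Z := psi2_eq P W hPpos hBfin hZ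
  set s := ∑ x, P x ^ 2 with hsdef
  have hs0 : 0 < s := Finset.sum_pos (fun x _ => by have := hPpos x; positivity)
    Finset.univ_nonempty
  have hren : renyi2 P = - Real.log s := rfl
  have hsZ : s < Z := by
    have h1 : 2 * psi2 P W = - Real.log Z := by rw [hpsi]; ring
    rw [h1, hren] at hψ
    have hlog : Real.log s < Real.log Z := by linarith
    calc s = Real.exp (Real.log s) := (Real.exp_log hs0).symm
      _ < Real.exp (Real.log Z) := Real.exp_lt_exp.mpr hlog
      _ = Z := Real.exp_log hZ
  have hsig : 0 ≤ sig2 P W :=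
    Finset.sum_nonneg fun a _ => Finset.sum_nonneg fun b _ =>
      Finset.sum_nonneg fun c _ => Finset.sum_nonneg fun d _ =>
        mul_nonneg (gam_nonneg P W hP0 _ _ _ _) (sq_nonneg _)
  have hexpZ : ∀ L : ℕ, Real.exp (-(2 * (L:ℝ) * psi2 P W)) = Z ^ L := by
    intro L
    rw [hpsi, show -(2 * (L:ℝ) * (-(1/2) * Real.log Z)) = (L:ℝ) * Real.log Z by ring,
      Real.exp_nat_mul, Real.exp_log hZ]
  constructor
  · intro L
    have hsplit := etilde_split P W hW1 L
    rw [← hsdef] at hsplit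
    constructor
    · have hpow : (0:ℝ) ≤ s ^ L := (pow_pos hs0 L).le
      linarith [hsplit]
    · rw [hexpZ L]
      exact etilde_le P W hP0 hW0 L
  · intro ε hε
    set gap := Real.log Z - Real.log s with hgap
    have hgappos : 0 < gap := by
      have : Real.log s < Real.log Z := Real.log_lt_log hs0 hsZ
      rw [hgap]; linarith
    set ε' := min ε gap with hε'def
    have hε'pos : 0 < ε' := lt_min hε hgappos
    have hε'ε : ε' ≤ ε := min_le_left _ _
    have hε'gap : ε' ≤ gap := min_le_right _ _
    obtain ⟨N₁, hN₁⟩ := exists_nat_ge (4 * sig2 P W / (Z * ε' ^ 2))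
    obtain ⟨N₂, hN₂⟩ := exists_nat_ge (2 * Real.log 8 / ε')
    refine ⟨max (max N₁ N₂) 1, fun L hL => ?_⟩
    have hL1 : 1 ≤ L := le_trans (le_max_right _ 1) hL
    have hLN₁ : (N₁ : ℝ) ≤ L :=
      Nat.cast_le.mpr (le_trans (le_trans (le_max_left _ _) (le_max_left _ _)) hL)
    have hLN₂ : (N₂ : ℝ) ≤ L :=
      Nat.cast_le.mpr (le_trans (le_trans (le_max_right _ _) (le_max_left _ _)) hL)
    have hLpos : (0:ℝ) < L := by exact_mod_cast hL1
    set t := ε' * L with htdef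
    have ht : 0 < t := mul_pos hε'pos hLpos
    set q := Real.exp (-(t/2)) with hqdef
    have hq0 : 0 < q := Real.exp_pos _
    have hq8 : q ≤ 1/8 := by
      have h1 : 2 * Real.log 8 / ε' ≤ L := le_trans hN₂ hLN₂
      rw [div_le_iff₀ hε'pos] at h1
      have h2 : Real.log 8 ≤ t / 2 := by rw [htdef]; nlinarith
      calc q ≤ Real.exp (- Real.log 8) := Real.exp_le_exp.mpr (by linarith)
        _ = 1/8 := by rw [Real.exp_neg, Real.exp_log (by norm_num : (0:ℝ) < 8)]; norm_num
    have hZL1 : 0 < Z ^ (L-1) := pow_pos hZ _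
    have hZL : 0 < Z ^ L := pow_pos hZ _
    have hZLsplit : Z ^ L = Z ^ (L-1) * Z := by
      conv_lhs => rw [show L = (L-1)+1 from (Nat.succ_pred_eq_of_pos hL1).symm]
      rw [pow_succ]
    -- tail is at most Z^L/4
    have hcond1 : (L:ℝ) * (sig2 P W * Z ^ (L-1)) / t ^ 2 ≤ Z ^ L / 4 := by
      have h4s : 4 * sig2 P W ≤ Z * ε' ^ 2 * L := by
        have h1 := (div_le_iff₀ (by positivity : (0:ℝ) < Z * ε' ^ 2)).mp (le_trans hN₁ hLN₁)
        nlinarith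
      rw [hZLsplit, htdef, div_le_div_iff₀ (by positivity) (by norm_num)]
      nlinarith [mul_le_mul_of_nonneg_right
        (mul_le_mul_of_nonneg_right h4s hZL1.le) hLpos.le]
    have hband := etilde_band P W hP0 hW0 ht (L := L)
    have hbandq : q * (Z ^ L / 4) ≤ probEtilde P W L := by
      refine le_trans ?_ hband
      apply mul_le_mul_of_nonneg_left _ hq0.le
      linarith
    -- s^L ≤ Z^L * q^2
    have hq2 : q ^ 2 = Real.exp (-(ε' * L)) := by
      rw [hqdef, ← Real.exp_nat_mul]
      congr 1
      push_cast
      rw [htdef]; ring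
    have hsL : s ^ L ≤ Z ^ L * q ^ 2 := by
      have hsle : s ≤ Z * Real.exp (-ε') := by
        have h1 : Real.log s = Real.log Z - gap := by rw [hgap]; ring
        calc s = Real.exp (Real.log Z - gap) := by rw [← h1, Real.exp_log hs0]
          _ ≤ Real.exp (Real.log Z - ε') := Real.exp_le_exp.mpr (by linarith)
          _ = Z * Real.exp (-ε') := by
              rw [show Real.log Z - ε' = Real.log Z + (-ε') by ring, Real.exp_add,
                Real.exp_log hZ]
      calc s ^ L ≤ (Z * Real.exp (-ε')) ^ L := by
            apply pow_le_pow_left₀ hs0.le hsle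
        _ = Z ^ L * Real.exp (-ε') ^ L := mul_pow _ _ _
        _ = Z ^ L * q ^ 2 := by
            rw [hq2, ← Real.exp_nat_mul]
            congr 2
            ring
    have hsplit := etilde_split P W hW1 L
    rw [← hsdef] at hsplit
    -- probE ≥ Z^L * q / 8
    have hkey : Z ^ L * (q / 8) ≤ probE P W L := by
      have h1 : probE P W L = probEtilde P W L - s ^ L := by linarith [hsplit]
      have h2 : q ^ 2 ≤ q / 8 := by nlinarith
      have h3 : Z ^ L * q ^ 2 ≤ Z ^ L * (q/8) := mul_le_mul_of_nonneg_left h2 hZL.le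
      have h4 : q * (Z ^ L / 4) = Z ^ L * (q/4) := by ring
      rw [h1]
      have h5 : Z ^ L * (q/4) ≤ probEtilde P W L := by rw [← h4]; exact hbandq
      have h6 : Z ^ L * (q/4) - Z ^ L * (q/8) = Z ^ L * (q/8) := by ring
      nlinarith
    -- conclude
    have htarget : Real.exp (-(2 * (L:ℝ) * (psi2 P W + ε))) ≤ Z ^ L * (q / 8) := by
      have hq4 : q ^ 4 ≤ q / 8 := by
        have hq3 : q ^ 3 ≤ (1/8:ℝ) ^ 3 := pow_le_pow_left₀ hq0.le hq8 3
        nlinarith [mul_le_mul_of_nonneg_left hq3 hq0.le]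
      have heq : Real.exp (-(2 * (L:ℝ) * (psi2 P W + ε'))) = Z ^ L * q ^ 4 := by
        rw [show -(2 * (L:ℝ) * (psi2 P W + ε')) = -(2 * (L:ℝ) * psi2 P W) + -(2 * ε' * L)
          by ring, Real.exp_add, hexpZ L]
        congr 1
        rw [hqdef, ← Real.exp_nat_mul]
        congr 1
        push_cast
        rw [htdef]; ring
      calc Real.exp (-(2 * (L:ℝ) * (psi2 P W + ε)))
          ≤ Real.exp (-(2 * (L:ℝ) * (psi2 P W + ε'))) := by
            apply Real.exp_le_exp.mpr
            nlinarith
        _ = Z ^ L * q ^ 4 := heq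
        _ ≤ Z ^ L * (q / 8) := mul_le_mul_of_nonneg_left hq4 hZL.le
    linarith
end
end

section
/- Let X(1), X(2), X(3) ∈ 𝒳^L be three independent length-L i.i.d. P_X fragments and let (Y(1),Y(2),Y(3)) be the output of the memoryless channel P_{Y|X} applied to them. Let Ẽ₁₂ be the event that the likelihood of the observations with fragments 1 and 2 swapped is at least the likelihood with the correct order, and Ẽ₁₃ analogously for fragments 1 and 3. Then P[Ẽ₁₂ ∩ Ẽ₁₃] ≤ (L+1)^{|𝒳|³} · exp(−3L·ψ₃(P_XY)) ≤ (L+1)^{|𝒳|³} · exp(−3L·ψ₂(P_XY)). -/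
open Real BigOperators Finset
open scoped Classical

noncomputable section

/-- The `(1,2)`-pair marginal of a joint PMF on `𝒳³`. -/
def marg12 {𝒳 : Type*} [Fintype 𝒳] (Q : 𝒳 × 𝒳 × 𝒳 → ℝ) : 𝒳 × 𝒳 → ℝ :=
  fun p => ∑ x₃, Q (p.1, p.2, x₃)

/-- The `(2,3)`-pair marginal of a joint PMF on `𝒳³`. -/
def marg23 {𝒳 : Type*} [Fintype 𝒳] (Q : 𝒳 × 𝒳 × 𝒳 → ℝ) : 𝒳 × 𝒳 → ℝ :=
  fun p => ∑ x₁, Q (x₁, p.1, p.2)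

/-- The `(1,3)`-pair marginal of a joint PMF on `𝒳³`. -/
def marg13 {𝒳 : Type*} [Fintype 𝒳] (Q : 𝒳 × 𝒳 × 𝒳 → ℝ) : 𝒳 × 𝒳 → ℝ :=
  fun p => ∑ x₂, Q (p.1, x₂, p.2)

/-- The rate function `ψ₃(P_XY)` for 3-cycles. -/
def psi3 {𝒳 𝒴 : Type*} [Fintype 𝒳] [Fintype 𝒴] (P : 𝒳 → ℝ) (W : 𝒳 → 𝒴 → ℝ) : ℝ :=
  sInf { v : ℝ | ∃ Q : 𝒳 × 𝒳 × 𝒳 → ℝ, IsPMF Q ∧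
    v = (1/3) * klD Q (fun z => P z.1 * P z.2.1 * P z.2.2)
      + (1/3) * (dQ W (marg12 Q) + dQ W (marg23 Q) + dQ W (marg13 Q)) }

/-- Probability of the intersection `Ẽ₁₂ ∩ Ẽ₁₃` of two transposition-likelihood-flip
events for three independent i.i.d.-`P` length-`L` fragments observed through the
memoryless channel `W`. -/
def probEtilde12and13 {𝒳 𝒴 : Type*} [Fintype 𝒳] [Fintype 𝒴]
    (P : 𝒳 → ℝ) (W : 𝒳 → 𝒴 → ℝ) (L : ℕ) : ℝ :=
  ∑ x₁ : Fin L → 𝒳, ∑ x₂ : Fin L → 𝒳, ∑ x₃ : Fin L → 𝒳,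
    ∑ y₁ : Fin L → 𝒴, ∑ y₂ : Fin L → 𝒴, ∑ y₃ : Fin L → 𝒴,
    (∏ j, P (x₁ j)) * (∏ j, P (x₂ j)) * (∏ j, P (x₃ j)) *
      (∏ j, W (x₁ j) (y₁ j)) * (∏ j, W (x₂ j) (y₂ j)) * (∏ j, W (x₃ j) (y₃ j)) *
      (if ((∏ j, W (x₁ j) (y₁ j)) * (∏ j, W (x₂ j) (y₂ j)) * (∏ j, W (x₃ j) (y₃ j)) ≤
            (∏ j, W (x₁ j) (y₂ j)) * (∏ j, W (x₂ j) (y₁ j)) * (∏ j, W (x₃ j) (y₃ j))) ∧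
          ((∏ j, W (x₁ j) (y₁ j)) * (∏ j, W (x₂ j) (y₂ j)) * (∏ j, W (x₃ j) (y₃ j)) ≤
            (∏ j, W (x₁ j) (y₃ j)) * (∏ j, W (x₂ j) (y₂ j)) * (∏ j, W (x₃ j) (y₁ j)))
        then 1 else 0)


/-! ### Auxiliary lemmas -/

section Aux

open Real

lemma sqrt_prod' {ι : Type*} (s : Finset ι) (f : ι → ℝ) (h : ∀ i ∈ s, 0 ≤ f i) :
    Real.sqrt (∏ i ∈ s, f i) = ∏ i ∈ s, Real.sqrt (f i) := by
  induction s using Finset.cons_induction with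
  | empty => simp
  | cons a s ha ih =>
    rw [Finset.prod_cons, Finset.prod_cons,
      Real.sqrt_mul (h a (Finset.mem_cons_self a s)),
      ih (fun i hi => h i (Finset.mem_cons_of_mem hi))]

lemma sum_fun_prod {ι β : Type*} [DecidableEq ι] [Fintype ι] [Fintype β] (F : ι → β → ℝ) :
    ∑ p : ι → β, ∏ i, F i (p i) = ∏ i, ∑ y, F i y := by
  rw [Finset.prod_univ_sum, Fintype.piFinset_univ]

lemma triple_sum_factor {β : Type*} [Fintype β] (C : ℝ) (a b c : β → ℝ) :
    ∑ y₁ : β, ∑ y₂ : β, ∑ y₃ : β, C * a y₁ * b y₂ * c y₃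
      = C * (∑ y, a y) * (∑ y, b y) * (∑ y, c y) := by
  have h3 : ∀ y₁ y₂ : β, ∑ y₃, C * a y₁ * b y₂ * c y₃
      = C * a y₁ * b y₂ * ∑ y₃, c y₃ := fun y₁ y₂ => by rw [← Finset.mul_sum]
  simp_rw [h3]
  have h2 : ∀ y₁ : β, ∑ y₂, C * a y₁ * b y₂ * (∑ y₃, c y₃)
      = C * a y₁ * (∑ y₂, b y₂) * (∑ y₃, c y₃) := by
    intro y₁
    rw [← Finset.sum_mul, ← Finset.mul_sum]
  simp_rw [h2]
  rw [← Finset.sum_mul, ← Finset.sum_mul, ← Finset.mul_sum]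

lemma klD_ge {α : Type*} [Fintype α] (Q R : α → ℝ) (hQ : ∀ a, 0 ≤ Q a)
    (hR : ∀ a, 0 < R a) : (∑ a, Q a) - (∑ a, R a) ≤ klD Q R := by
  rw [klD, ← Finset.sum_sub_distrib]
  apply Finset.sum_le_sum
  intro a _
  rcases eq_or_lt_of_le (hQ a) with h | h
  · rw [← h]; simpa using (hR a).le
  · have hpos : 0 < R a / Q a := div_pos (hR a) h
    have hlog := Real.log_le_sub_one_of_pos hpos
    have h1 : Real.log (Q a / R a) = - Real.log (R a / Q a) := by
      rw [← Real.log_inv]; congr 1; rw [inv_div]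
    have h2 := mul_le_mul_of_nonneg_left hlog h.le
    have h3 : Q a * (R a / Q a - 1) = R a - Q a := by field_simp
    nlinarith [h2, h3]

lemma gibbs_isLeast {α : Type*} [Fintype α] [Nonempty α] (μ f : α → ℝ)
    (hμ : ∀ a, 0 < μ a) :
    IsLeast {v : ℝ | ∃ Q : α → ℝ, IsPMF Q ∧ v = klD Q μ + ∑ a, Q a * f a}
      (-Real.log (∑ a, μ a * Real.exp (-f a))) := by
  set Z := ∑ a, μ a * Real.exp (-f a) with hZdef
  have hZ : 0 < Z :=
    Finset.sum_pos (fun a _ => mul_pos (hμ a) (Real.exp_pos _)) Finset.univ_nonempty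
  set Qs : α → ℝ := fun a => μ a * Real.exp (-f a) / Z with hQsdef
  have hQpos : ∀ a, 0 < Qs a := fun a => div_pos (mul_pos (hμ a) (Real.exp_pos _)) hZ
  have hQsum : ∑ a, Qs a = 1 := by
    rw [hQsdef, ← Finset.sum_div]; exact div_self hZ.ne'
  have hQlog : ∀ a, Real.log (Qs a / μ a) = -f a - Real.log Z := by
    intro a
    have he : Qs a / μ a = Real.exp (-f a) / Z := by
      rw [hQsdef]; field_simp [(hμ a).ne']
    rw [he, Real.log_div (Real.exp_pos _).ne' hZ.ne', Real.log_exp]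
  constructor
  · refine ⟨Qs, ⟨fun a => (hQpos a).le, hQsum⟩, ?_⟩
    have hval : klD Qs μ + ∑ a, Qs a * f a = ∑ a, Qs a * (-Real.log Z) := by
      rw [klD, ← Finset.sum_add_distrib]
      refine Finset.sum_congr rfl fun a _ => ?_
      rw [hQlog a]; ring
    rw [hval, ← Finset.sum_mul, hQsum, one_mul]
  · rintro v ⟨Q, ⟨hQ0, hQ1⟩, rfl⟩
    have key : ∀ a, Q a * Real.log (Q a / Qs a) + Q a * (-Real.log Z)
        = Q a * Real.log (Q a / μ a) + Q a * f a := by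
      intro a
      rcases eq_or_lt_of_le (hQ0 a) with h | h
      · rw [← h]; ring
      · have e1 : Real.log (Q a / Qs a) = Real.log (Q a) - Real.log (Qs a) :=
          Real.log_div h.ne' (hQpos a).ne'
        have e2 : Real.log (Q a / μ a) = Real.log (Q a) - Real.log (μ a) :=
          Real.log_div h.ne' (hμ a).ne'
        have e3 : Real.log (Qs a) = Real.log (μ a) + (-f a) - Real.log Z := by
          rw [hQsdef]
          simp only []
          rw [Real.log_div (mul_pos (hμ a) (Real.exp_pos _)).ne' hZ.ne',
            Real.log_mul (hμ a).ne' (Real.exp_pos _).ne', Real.log_exp]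
        rw [e1, e2, e3]; ring
    have hkl : 0 ≤ klD Q Qs := by
      have h := klD_ge Q Qs hQ0 hQpos
      rw [hQ1, hQsum] at h; linarith
    have hrw : klD Q μ + ∑ a, Q a * f a = klD Q Qs - Real.log Z := by
      have hsum : ∑ a, (Q a * Real.log (Q a / μ a) + Q a * f a)
          = ∑ a, (Q a * Real.log (Q a / Qs a) + Q a * (-Real.log Z)) :=
        Finset.sum_congr rfl fun a _ => (key a).symm
      simp only [klD]
      rw [← Finset.sum_add_distrib, hsum, Finset.sum_add_distrib, ← Finset.sum_mul, hQ1]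
      ring
    linarith

lemma dQ_marg12' {𝒳 𝒴 : Type*} [Fintype 𝒳] [Fintype 𝒴] (W : 𝒳 → 𝒴 → ℝ)
    (Q : 𝒳 × 𝒳 × 𝒳 → ℝ) :
    dQ W (marg12 Q) = ∑ z : 𝒳 × 𝒳 × 𝒳, Q z * bhat W z.1 z.2.1 := by
  simp only [dQ, marg12, Fintype.sum_prod_type, Finset.sum_mul]

lemma dQ_marg23' {𝒳 𝒴 : Type*} [Fintype 𝒳] [Fintype 𝒴] (W : 𝒳 → 𝒴 → ℝ)
    (Q : 𝒳 × 𝒳 × 𝒳 → ℝ) :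
    dQ W (marg23 Q) = ∑ z : 𝒳 × 𝒳 × 𝒳, Q z * bhat W z.2.1 z.2.2 := by
  have h1 : dQ W (marg23 Q) = ∑ b, ∑ c, ∑ a, Q (a, b, c) * bhat W b c := by
    simp only [dQ, marg23, Fintype.sum_prod_type, Finset.sum_mul]
  have h2 : ∑ z : 𝒳 × 𝒳 × 𝒳, Q z * bhat W z.2.1 z.2.2
      = ∑ a, ∑ b, ∑ c, Q (a, b, c) * bhat W b c := by
    simp only [Fintype.sum_prod_type]
  rw [h1, h2]
  have h3 : ∀ b : 𝒳, ∑ c, ∑ a, Q (a, b, c) * bhat W b c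
      = ∑ a, ∑ c, Q (a, b, c) * bhat W b c := fun b => Finset.sum_comm
  simp_rw [h3]
  exact Finset.sum_comm

lemma dQ_marg13' {𝒳 𝒴 : Type*} [Fintype 𝒳] [Fintype 𝒴] (W : 𝒳 → 𝒴 → ℝ)
    (Q : 𝒳 × 𝒳 × 𝒳 → ℝ) :
    dQ W (marg13 Q) = ∑ z : 𝒳 × 𝒳 × 𝒳, Q z * bhat W z.1 z.2.2 := by
  have h1 : dQ W (marg13 Q) = ∑ a, ∑ c, ∑ b, Q (a, b, c) * bhat W a c := by
    simp only [dQ, marg13, Fintype.sum_prod_type, Finset.sum_mul]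
  have h2 : ∑ z : 𝒳 × 𝒳 × 𝒳, Q z * bhat W z.1 z.2.2
      = ∑ a, ∑ b, ∑ c, Q (a, b, c) * bhat W a c := by
    simp only [Fintype.sum_prod_type]
  rw [h1, h2]
  exact Finset.sum_congr rfl fun a _ => Finset.sum_comm

lemma psi2_eq_s12 {𝒳 𝒴 : Type*} [Fintype 𝒳] [Fintype 𝒴] [Nonempty 𝒳]
    (P : 𝒳 → ℝ) (W : 𝒳 → 𝒴 → ℝ) (hPpos : ∀ x, 0 < P x) :
    psi2 P W = -(1/2) * Real.log
      (∑ p : 𝒳 × 𝒳, P p.1 * P p.2 * Real.exp (-(2 * bhat W p.1 p.2))) := by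
  have hg := gibbs_isLeast (fun p : 𝒳 × 𝒳 => P p.1 * P p.2)
    (fun p => 2 * bhat W p.1 p.2) (fun p => mul_pos (hPpos _) (hPpos _))
  have hrel : ∀ Q : 𝒳 × 𝒳 → ℝ,
      (1/2 : ℝ) * klD Q (fun p => P p.1 * P p.2) + dQ W Q
      = (1/2) * (klD Q (fun p => P p.1 * P p.2)
          + ∑ p, Q p * (2 * bhat W p.1 p.2)) := by
    intro Q
    have h : ∑ p, Q p * (2 * bhat W p.1 p.2) = 2 * dQ W Q := by
      rw [dQ, Finset.mul_sum]; exact Finset.sum_congr rfl fun p _ => by ring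
    rw [h]; ring
  have hset : IsLeast { v : ℝ | ∃ Q : 𝒳 × 𝒳 → ℝ, IsPMF Q ∧
      v = (1/2) * klD Q (fun p => P p.1 * P p.2) + dQ W Q }
      (-(1/2) * Real.log
        (∑ p : 𝒳 × 𝒳, P p.1 * P p.2 * Real.exp (-(2 * bhat W p.1 p.2)))) := by
    constructor
    · obtain ⟨Q, hQ, hv⟩ := hg.1
      exact ⟨Q, hQ, by rw [hrel, ← hv]; ring⟩
    · rintro v ⟨Q, hQ, rfl⟩
      have h := hg.2 ⟨Q, hQ, rfl⟩
      rw [hrel]; linarith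
  rw [psi2, hset.csInf_eq]

lemma psi3_eq {𝒳 𝒴 : Type*} [Fintype 𝒳] [Fintype 𝒴] [Nonempty 𝒳]
    (P : 𝒳 → ℝ) (W : 𝒳 → 𝒴 → ℝ) (hPpos : ∀ x, 0 < P x) :
    psi3 P W = -(1/3) * Real.log
      (∑ z : 𝒳 × 𝒳 × 𝒳, P z.1 * P z.2.1 * P z.2.2 *
        Real.exp (-(bhat W z.1 z.2.1 + bhat W z.2.1 z.2.2 + bhat W z.1 z.2.2))) := by
  have hg := gibbs_isLeast (fun z : 𝒳 × 𝒳 × 𝒳 => P z.1 * P z.2.1 * P z.2.2)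
    (fun z => bhat W z.1 z.2.1 + bhat W z.2.1 z.2.2 + bhat W z.1 z.2.2)
    (fun z => mul_pos (mul_pos (hPpos _) (hPpos _)) (hPpos _))
  have hrel : ∀ Q : 𝒳 × 𝒳 × 𝒳 → ℝ,
      (1/3 : ℝ) * klD Q (fun z => P z.1 * P z.2.1 * P z.2.2)
        + (1/3) * (dQ W (marg12 Q) + dQ W (marg23 Q) + dQ W (marg13 Q))
      = (1/3) * (klD Q (fun z => P z.1 * P z.2.1 * P z.2.2)
          + ∑ z, Q z * (bhat W z.1 z.2.1 + bhat W z.2.1 z.2.2 + bhat W z.1 z.2.2)) := by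
    intro Q
    have h : ∑ z, Q z * (bhat W z.1 z.2.1 + bhat W z.2.1 z.2.2 + bhat W z.1 z.2.2)
        = dQ W (marg12 Q) + dQ W (marg23 Q) + dQ W (marg13 Q) := by
      rw [dQ_marg12', dQ_marg23', dQ_marg13', ← Finset.sum_add_distrib,
        ← Finset.sum_add_distrib]
      exact Finset.sum_congr rfl fun z _ => by ring
    rw [h]; ring
  have hset : IsLeast { v : ℝ | ∃ Q : 𝒳 × 𝒳 × 𝒳 → ℝ, IsPMF Q ∧
      v = (1/3) * klD Q (fun z => P z.1 * P z.2.1 * P z.2.2)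
        + (1/3) * (dQ W (marg12 Q) + dQ W (marg23 Q) + dQ W (marg13 Q)) }
      (-(1/3) * Real.log
        (∑ z : 𝒳 × 𝒳 × 𝒳, P z.1 * P z.2.1 * P z.2.2 *
          Real.exp (-(bhat W z.1 z.2.1 + bhat W z.2.1 z.2.2 + bhat W z.1 z.2.2)))) := by
    constructor
    · obtain ⟨Q, hQ, hv⟩ := hg.1
      exact ⟨Q, hQ, by rw [hrel, ← hv]; ring⟩
    · rintro v ⟨Q, hQ, rfl⟩
      have h := hg.2 ⟨Q, hQ, rfl⟩
      rw [hrel]; linarith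
  rw [psi3, hset.csInf_eq]

/-- Double Cauchy–Schwarz: `Z₃² ≤ Z₂³` for a nonnegative symmetric kernel. -/
lemma cs_key {𝒳 : Type*} [Fintype 𝒳] (P : 𝒳 → ℝ) (G : 𝒳 → 𝒳 → ℝ)
    (hP : ∀ a, 0 ≤ P a) (hG : ∀ a b, 0 ≤ G a b) (hsym : ∀ a b, G a b = G b a) :
    (∑ a, ∑ b, ∑ c, P a * P b * P c * (G a b * G b c * G a c)) ^ 2
      ≤ (∑ a, ∑ b, P a * P b * (G a b) ^ 2) ^ 3 := by
  set Z2 : ℝ := ∑ a, ∑ b, P a * P b * (G a b) ^ 2 with hZ2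
  set k : 𝒳 → 𝒳 → ℝ := fun b b' => ∑ a, P a * (G a b * G a b') with hk
  set h : 𝒳 → 𝒳 → ℝ := fun a c => ∑ b, P b * (G a b * G b c) with hh
  have hZ2nn : 0 ≤ Z2 :=
    Finset.sum_nonneg fun a _ => Finset.sum_nonneg fun b _ =>
      mul_nonneg (mul_nonneg (hP a) (hP b)) (sq_nonneg _)
  -- rewrite Z3 as a sum over pairs
  have hZ3 : (∑ a, ∑ b, ∑ c, P a * P b * P c * (G a b * G b c * G a c))
      = ∑ p : 𝒳 × 𝒳, (Real.sqrt (P p.1 * P p.2) * G p.1 p.2)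
          * (Real.sqrt (P p.1 * P p.2) * h p.1 p.2) := by
    rw [Fintype.sum_prod_type]
    refine Finset.sum_congr rfl fun a _ => ?_
    have hswap : ∑ b, ∑ c, P a * P b * P c * (G a b * G b c * G a c)
        = ∑ c, ∑ b, P a * P b * P c * (G a b * G b c * G a c) := Finset.sum_comm
    rw [hswap]
    refine Finset.sum_congr rfl fun c _ => ?_
    have hs : Real.sqrt (P a * P c) * Real.sqrt (P a * P c) = P a * P c :=
      Real.mul_self_sqrt (mul_nonneg (hP a) (hP c))
    simp only [hh]
    rw [Finset.mul_sum, Finset.mul_sum]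
    refine Finset.sum_congr rfl fun b _ => ?_
    linear_combination (-(G a c * P b * (G a b * G b c))) * hs
  have hCS := Finset.sum_mul_sq_le_sq_mul_sq Finset.univ
    (fun p : 𝒳 × 𝒳 => Real.sqrt (P p.1 * P p.2) * G p.1 p.2)
    (fun p : 𝒳 × 𝒳 => Real.sqrt (P p.1 * P p.2) * h p.1 p.2)
  have hf2 : ∑ p : 𝒳 × 𝒳, (Real.sqrt (P p.1 * P p.2) * G p.1 p.2) ^ 2 = Z2 := by
    rw [hZ2, Fintype.sum_prod_type]
    refine Finset.sum_congr rfl fun a _ => Finset.sum_congr rfl fun b _ => ?_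
    have hs : Real.sqrt (P a * P b) ^ 2 = P a * P b :=
      Real.sq_sqrt (mul_nonneg (hP a) (hP b))
    rw [mul_pow, hs]
  set S : ℝ := ∑ p : 𝒳 × 𝒳, (Real.sqrt (P p.1 * P p.2) * h p.1 p.2) ^ 2 with hSdef
  have hScs : (∑ a, ∑ b, ∑ c, P a * P b * P c * (G a b * G b c * G a c)) ^ 2 ≤ Z2 * S := by
    rw [hZ3, ← hf2]; exact hCS
  -- now bound S by Z2 ^ 2
  have hSexp : S = ∑ b, ∑ b', P b * P b' * (k b b' * k b b') := by
    have hS1 : S = ∑ a, ∑ c, ∑ b, ∑ b', P b * P b'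
        * ((P a * (G a b * G a b')) * (P c * (G c b * G c b'))) := by
      rw [hSdef, Fintype.sum_prod_type]
      refine Finset.sum_congr rfl fun a _ => Finset.sum_congr rfl fun c _ => ?_
      have hs : Real.sqrt (P a * P c) ^ 2 = P a * P c :=
        Real.sq_sqrt (mul_nonneg (hP a) (hP c))
      rw [mul_pow, hs]
      simp only [hh]
      rw [sq, Finset.sum_mul_sum, Finset.mul_sum]
      refine Finset.sum_congr rfl fun b _ => ?_
      rw [Finset.mul_sum]
      refine Finset.sum_congr rfl fun b' _ => ?_
      rw [hsym c b, hsym c b']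
      ring_nf
    rw [hS1]
    have e1 : ∀ a : 𝒳, ∑ c, ∑ b, ∑ b', P b * P b'
          * ((P a * (G a b * G a b')) * (P c * (G c b * G c b')))
        = ∑ b, ∑ c, ∑ b', P b * P b'
          * ((P a * (G a b * G a b')) * (P c * (G c b * G c b'))) :=
      fun a => Finset.sum_comm
    simp_rw [e1]
    have e2 : ∀ a b : 𝒳, ∑ c, ∑ b', P b * P b'
          * ((P a * (G a b * G a b')) * (P c * (G c b * G c b')))
        = ∑ b', ∑ c, P b * P b'
          * ((P a * (G a b * G a b')) * (P c * (G c b * G c b'))) :=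
      fun a b => Finset.sum_comm
    simp_rw [e2]
    rw [Finset.sum_comm]
    refine Finset.sum_congr rfl fun b _ => ?_
    rw [Finset.sum_comm]
    refine Finset.sum_congr rfl fun b' _ => ?_
    have hr : P b * P b' * (k b b' * k b b')
        = ∑ a, ∑ c, P b * P b'
            * ((P a * (G a b * G a b')) * (P c * (G c b * G c b'))) := by
      simp only [hk]
      rw [Finset.sum_mul_sum, Finset.mul_sum]
      refine Finset.sum_congr rfl fun a _ => ?_
      rw [Finset.mul_sum]
    rw [hr]
  have hkcs : ∀ b b', k b b' * k b b' ≤ k b b * k b' b' := by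
    intro b b'
    have hcs2 := Finset.sum_mul_sq_le_sq_mul_sq Finset.univ
      (fun a => Real.sqrt (P a) * G a b) (fun a => Real.sqrt (P a) * G a b')
    have e0 : ∑ a, (Real.sqrt (P a) * G a b) * (Real.sqrt (P a) * G a b') = k b b' := by
      simp only [hk]
      refine Finset.sum_congr rfl fun a _ => ?_
      have hs : Real.sqrt (P a) * Real.sqrt (P a) = P a := Real.mul_self_sqrt (hP a)
      linear_combination (G a b * G a b') * hs
    have e1 : ∑ a, (Real.sqrt (P a) * G a b) ^ 2 = k b b := by
      simp only [hk]
      refine Finset.sum_congr rfl fun a _ => ?_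
      have hs : Real.sqrt (P a) ^ 2 = P a := Real.sq_sqrt (hP a)
      rw [mul_pow, hs]; ring
    have e2 : ∑ a, (Real.sqrt (P a) * G a b') ^ 2 = k b' b' := by
      simp only [hk]
      refine Finset.sum_congr rfl fun a _ => ?_
      have hs : Real.sqrt (P a) ^ 2 = P a := Real.sq_sqrt (hP a)
      rw [mul_pow, hs]; ring
    calc k b b' * k b b'
        = (∑ a, (Real.sqrt (P a) * G a b) * (Real.sqrt (P a) * G a b')) ^ 2 := by
          rw [e0]; ring
      _ ≤ _ := hcs2
      _ = k b b * k b' b' := by rw [e1, e2]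
  have hSle : S ≤ Z2 ^ 2 := by
    rw [hSexp]
    have step : ∑ b, ∑ b', P b * P b' * (k b b' * k b b')
        ≤ ∑ b, ∑ b', P b * P b' * (k b b * k b' b') := by
      refine Finset.sum_le_sum fun b _ => Finset.sum_le_sum fun b' _ => ?_
      exact mul_le_mul_of_nonneg_left (hkcs b b') (mul_nonneg (hP b) (hP b'))
    refine step.trans (le_of_eq ?_)
    have hfac : ∑ b, ∑ b', P b * P b' * (k b b * k b' b')
        = (∑ b, P b * k b b) * (∑ b', P b' * k b' b') := by
      rw [Finset.sum_mul_sum]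
      refine Finset.sum_congr rfl fun b _ => Finset.sum_congr rfl fun b' _ => by ring
    have hdiag : ∑ b, P b * k b b = Z2 := by
      rw [hZ2]
      simp only [hk]
      have hc : ∀ b : 𝒳, P b * ∑ a, P a * (G a b * G a b) = ∑ a, P b * P a * G a b ^ 2 := by
        intro b
        rw [Finset.mul_sum]
        exact Finset.sum_congr rfl fun a _ => by ring
      simp_rw [hc]
      rw [Finset.sum_comm]
      exact Finset.sum_congr rfl fun a _ => Finset.sum_congr rfl fun b _ => by ring
    rw [hfac, hdiag]; ring
  calc (∑ a, ∑ b, ∑ c, P a * P b * P c * (G a b * G b c * G a c)) ^ 2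
      ≤ Z2 * S := hScs
    _ ≤ Z2 * Z2 ^ 2 := mul_le_mul_of_nonneg_left hSle hZ2nn
    _ = Z2 ^ 3 := by ring

end Aux

section Main

set_option maxHeartbeats 1600000 in
/-- The core Bhattacharyya/Cauchy–Schwarz bound on the probability. -/
lemma prob_le_T_pow {𝒳 𝒴 : Type*} [Fintype 𝒳] [Fintype 𝒴] (P : 𝒳 → ℝ) (W : 𝒳 → 𝒴 → ℝ)
    (hPnn : ∀ x, 0 ≤ P x) (hWnn : ∀ x y, 0 ≤ W x y) (L : ℕ) :
    probEtilde12and13 P W L ≤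
      (∑ a, ∑ b, ∑ c, P a * P b * P c *
        ((∑ y, Real.sqrt (W a y * W b y)) * (∑ y, Real.sqrt (W b y * W c y)) *
         (∑ y, Real.sqrt (W a y * W c y)))) ^ L := by
  set g : 𝒳 → 𝒳 → ℝ := fun a b => ∑ y, Real.sqrt (W a y * W b y) with hg
  have hgnn : ∀ a b, 0 ≤ g a b := fun a b =>
    Finset.sum_nonneg fun y _ => Real.sqrt_nonneg _
  have hgsym : ∀ a b, g a b = g b a := fun a b => by
    simp only [hg]
    exact Finset.sum_congr rfl fun y _ => by rw [mul_comm]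
  calc probEtilde12and13 P W L
      ≤ ∑ x₁ : Fin L → 𝒳, ∑ x₂ : Fin L → 𝒳, ∑ x₃ : Fin L → 𝒳,
          (∏ j, P (x₁ j)) * (∏ j, P (x₂ j)) * (∏ j, P (x₃ j)) *
          ((∏ j, g (x₂ j) (x₃ j)) * (∏ j, g (x₁ j) (x₂ j)) * (∏ j, g (x₃ j) (x₁ j))) := by
        simp only [probEtilde12and13]
        refine Finset.sum_le_sum fun x₁ _ => Finset.sum_le_sum fun x₂ _ =>
          Finset.sum_le_sum fun x₃ _ => ?_
        have hCnn : 0 ≤ (∏ j, P (x₁ j)) * (∏ j, P (x₂ j)) * (∏ j, P (x₃ j)) :=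
          mul_nonneg (mul_nonneg (Finset.prod_nonneg fun j _ => hPnn _)
            (Finset.prod_nonneg fun j _ => hPnn _)) (Finset.prod_nonneg fun j _ => hPnn _)
        calc ∑ y₁ : Fin L → 𝒴, ∑ y₂ : Fin L → 𝒴, ∑ y₃ : Fin L → 𝒴,
            (∏ j, P (x₁ j)) * (∏ j, P (x₂ j)) * (∏ j, P (x₃ j)) *
              (∏ j, W (x₁ j) (y₁ j)) * (∏ j, W (x₂ j) (y₂ j)) * (∏ j, W (x₃ j) (y₃ j)) *
              (if ((∏ j, W (x₁ j) (y₁ j)) * (∏ j, W (x₂ j) (y₂ j)) * (∏ j, W (x₃ j) (y₃ j)) ≤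
                    (∏ j, W (x₁ j) (y₂ j)) * (∏ j, W (x₂ j) (y₁ j)) * (∏ j, W (x₃ j) (y₃ j))) ∧
                  ((∏ j, W (x₁ j) (y₁ j)) * (∏ j, W (x₂ j) (y₂ j)) * (∏ j, W (x₃ j) (y₃ j)) ≤
                    (∏ j, W (x₁ j) (y₃ j)) * (∏ j, W (x₂ j) (y₂ j)) * (∏ j, W (x₃ j) (y₁ j)))
                then 1 else 0)
            ≤ ∑ y₁ : Fin L → 𝒴, ∑ y₂ : Fin L → 𝒴, ∑ y₃ : Fin L → 𝒴,
              ((∏ j, P (x₁ j)) * (∏ j, P (x₂ j)) * (∏ j, P (x₃ j))) *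
              (∏ j, Real.sqrt (W (x₂ j) (y₁ j) * W (x₃ j) (y₁ j))) *
              (∏ j, Real.sqrt (W (x₁ j) (y₂ j) * W (x₂ j) (y₂ j))) *
              (∏ j, Real.sqrt (W (x₃ j) (y₃ j) * W (x₁ j) (y₃ j))) := by
              refine Finset.sum_le_sum fun y₁ _ => Finset.sum_le_sum fun y₂ _ =>
                Finset.sum_le_sum fun y₃ _ => ?_
              have hAnn : (0:ℝ) ≤ (∏ j, W (x₁ j) (y₁ j)) * (∏ j, W (x₂ j) (y₂ j)) *
                  (∏ j, W (x₃ j) (y₃ j)) :=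
                mul_nonneg (mul_nonneg (Finset.prod_nonneg fun j _ => hWnn _ _)
                  (Finset.prod_nonneg fun j _ => hWnn _ _))
                  (Finset.prod_nonneg fun j _ => hWnn _ _)
              have hB1nn : (0:ℝ) ≤ (∏ j, W (x₁ j) (y₂ j)) * (∏ j, W (x₂ j) (y₁ j)) *
                  (∏ j, W (x₃ j) (y₃ j)) :=
                mul_nonneg (mul_nonneg (Finset.prod_nonneg fun j _ => hWnn _ _)
                  (Finset.prod_nonneg fun j _ => hWnn _ _))
                  (Finset.prod_nonneg fun j _ => hWnn _ _)
              have hr1nn : (0:ℝ) ≤ ∏ j, Real.sqrt (W (x₂ j) (y₁ j) * W (x₃ j) (y₁ j)) :=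
                Finset.prod_nonneg fun j _ => Real.sqrt_nonneg _
              have hr2nn : (0:ℝ) ≤ ∏ j, Real.sqrt (W (x₁ j) (y₂ j) * W (x₂ j) (y₂ j)) :=
                Finset.prod_nonneg fun j _ => Real.sqrt_nonneg _
              have hr3nn : (0:ℝ) ≤ ∏ j, Real.sqrt (W (x₃ j) (y₃ j) * W (x₁ j) (y₃ j)) :=
                Finset.prod_nonneg fun j _ => Real.sqrt_nonneg _
              have hsplit : (∏ j, Real.sqrt (W (x₂ j) (y₁ j) * W (x₃ j) (y₁ j))) *
                  (∏ j, Real.sqrt (W (x₁ j) (y₂ j) * W (x₂ j) (y₂ j))) *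
                  (∏ j, Real.sqrt (W (x₃ j) (y₃ j) * W (x₁ j) (y₃ j)))
                  = Real.sqrt (((∏ j, W (x₁ j) (y₂ j)) * (∏ j, W (x₂ j) (y₁ j)) *
                      (∏ j, W (x₃ j) (y₃ j))) *
                    ((∏ j, W (x₁ j) (y₃ j)) * (∏ j, W (x₂ j) (y₂ j)) *
                      (∏ j, W (x₃ j) (y₁ j)))) := by
                rw [← sqrt_prod' _ _ (fun j _ => mul_nonneg (hWnn _ _) (hWnn _ _)),
                  ← sqrt_prod' _ _ (fun j _ => mul_nonneg (hWnn _ _) (hWnn _ _)),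
                  ← sqrt_prod' _ _ (fun j _ => mul_nonneg (hWnn _ _) (hWnn _ _)),
                  ← Real.sqrt_mul (Finset.prod_nonneg
                    fun j _ => mul_nonneg (hWnn _ _) (hWnn _ _)),
                  ← Real.sqrt_mul (mul_nonneg
                    (Finset.prod_nonneg fun j _ => mul_nonneg (hWnn _ _) (hWnn _ _))
                    (Finset.prod_nonneg fun j _ => mul_nonneg (hWnn _ _) (hWnn _ _)))]
                congr 1
                simp only [Finset.prod_mul_distrib]
                ring
              split_ifs with hcond
              · have hAB : ((∏ j, W (x₁ j) (y₁ j)) * (∏ j, W (x₂ j) (y₂ j)) *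
                    (∏ j, W (x₃ j) (y₃ j))) ≤ Real.sqrt
                      (((∏ j, W (x₁ j) (y₂ j)) * (∏ j, W (x₂ j) (y₁ j)) *
                        (∏ j, W (x₃ j) (y₃ j))) *
                      ((∏ j, W (x₁ j) (y₃ j)) * (∏ j, W (x₂ j) (y₂ j)) *
                        (∏ j, W (x₃ j) (y₁ j)))) := by
                  rw [← Real.sqrt_mul_self hAnn]
                  exact Real.sqrt_le_sqrt (mul_le_mul hcond.1 hcond.2 hAnn hB1nn)
                calc (∏ j, P (x₁ j)) * (∏ j, P (x₂ j)) * (∏ j, P (x₃ j)) *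
                    (∏ j, W (x₁ j) (y₁ j)) * (∏ j, W (x₂ j) (y₂ j)) * (∏ j, W (x₃ j) (y₃ j)) * 1
                    = ((∏ j, P (x₁ j)) * (∏ j, P (x₂ j)) * (∏ j, P (x₃ j))) *
                      ((∏ j, W (x₁ j) (y₁ j)) * (∏ j, W (x₂ j) (y₂ j)) *
                        (∏ j, W (x₃ j) (y₃ j))) := by ring
                  _ ≤ ((∏ j, P (x₁ j)) * (∏ j, P (x₂ j)) * (∏ j, P (x₃ j))) *
                      Real.sqrt (((∏ j, W (x₁ j) (y₂ j)) * (∏ j, W (x₂ j) (y₁ j)) *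
                          (∏ j, W (x₃ j) (y₃ j))) *
                        ((∏ j, W (x₁ j) (y₃ j)) * (∏ j, W (x₂ j) (y₂ j)) *
                          (∏ j, W (x₃ j) (y₁ j)))) :=
                    mul_le_mul_of_nonneg_left hAB hCnn
                  _ = _ := by rw [← hsplit]; ring
              · rw [mul_zero]
                exact mul_nonneg (mul_nonneg (mul_nonneg hCnn hr1nn) hr2nn) hr3nn
          _ = ((∏ j, P (x₁ j)) * (∏ j, P (x₂ j)) * (∏ j, P (x₃ j))) *
              (∑ y₁ : Fin L → 𝒴, ∏ j, Real.sqrt (W (x₂ j) (y₁ j) * W (x₃ j) (y₁ j))) *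
              (∑ y₂ : Fin L → 𝒴, ∏ j, Real.sqrt (W (x₁ j) (y₂ j) * W (x₂ j) (y₂ j))) *
              (∑ y₃ : Fin L → 𝒴, ∏ j, Real.sqrt (W (x₃ j) (y₃ j) * W (x₁ j) (y₃ j))) :=
            triple_sum_factor _ _ _ _
          _ = (∏ j, P (x₁ j)) * (∏ j, P (x₂ j)) * (∏ j, P (x₃ j)) *
              ((∏ j, g (x₂ j) (x₃ j)) * (∏ j, g (x₁ j) (x₂ j)) * (∏ j, g (x₃ j) (x₁ j))) := by
            have e1 : (∑ y₁ : Fin L → 𝒴, ∏ j, Real.sqrt (W (x₂ j) (y₁ j) * W (x₃ j) (y₁ j)))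
                = ∏ j, ∑ y, Real.sqrt (W (x₂ j) y * W (x₃ j) y) :=
              sum_fun_prod (fun j y => Real.sqrt (W (x₂ j) y * W (x₃ j) y))
            have e2 : (∑ y₂ : Fin L → 𝒴, ∏ j, Real.sqrt (W (x₁ j) (y₂ j) * W (x₂ j) (y₂ j)))
                = ∏ j, ∑ y, Real.sqrt (W (x₁ j) y * W (x₂ j) y) :=
              sum_fun_prod (fun j y => Real.sqrt (W (x₁ j) y * W (x₂ j) y))
            have e3 : (∑ y₃ : Fin L → 𝒴, ∏ j, Real.sqrt (W (x₃ j) (y₃ j) * W (x₁ j) (y₃ j)))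
                = ∏ j, ∑ y, Real.sqrt (W (x₃ j) y * W (x₁ j) y) :=
              sum_fun_prod (fun j y => Real.sqrt (W (x₃ j) y * W (x₁ j) y))
            rw [e1, e2, e3]
            simp only [hg]
            ring
    _ = (∑ a, ∑ b, ∑ c, P a * P b * P c * (g a b * g b c * g a c)) ^ L := by
        have hprod : ∀ x₁ x₂ x₃ : Fin L → 𝒳,
            (∏ j, P (x₁ j)) * (∏ j, P (x₂ j)) * (∏ j, P (x₃ j)) *
            ((∏ j, g (x₂ j) (x₃ j)) * (∏ j, g (x₁ j) (x₂ j)) * (∏ j, g (x₃ j) (x₁ j)))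
            = ∏ j, (P (x₁ j) * P (x₂ j) * P (x₃ j) *
                (g (x₁ j) (x₂ j) * g (x₂ j) (x₃ j) * g (x₁ j) (x₃ j))) := by
          intro x₁ x₂ x₃
          have hg31 : (∏ j, g (x₃ j) (x₁ j)) = ∏ j, g (x₁ j) (x₃ j) :=
            Finset.prod_congr rfl fun j _ => hgsym _ _
          rw [hg31]
          simp only [Finset.prod_mul_distrib]
          ring
        simp_rw [hprod]
        calc ∑ x₁ : Fin L → 𝒳, ∑ x₂ : Fin L → 𝒳, ∑ x₃ : Fin L → 𝒳,
            ∏ j, (P (x₁ j) * P (x₂ j) * P (x₃ j) *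
              (g (x₁ j) (x₂ j) * g (x₂ j) (x₃ j) * g (x₁ j) (x₃ j)))
            = ∑ x₁ : Fin L → 𝒳, ∑ x₂ : Fin L → 𝒳,
              ∏ j, ∑ c, (P (x₁ j) * P (x₂ j) * P c *
                (g (x₁ j) (x₂ j) * g (x₂ j) c * g (x₁ j) c)) := by
              refine Finset.sum_congr rfl fun x₁ _ => Finset.sum_congr rfl fun x₂ _ => ?_
              exact sum_fun_prod (fun j c => P (x₁ j) * P (x₂ j) * P c *
                (g (x₁ j) (x₂ j) * g (x₂ j) c * g (x₁ j) c))
          _ = ∑ x₁ : Fin L → 𝒳, ∏ j, ∑ b, ∑ c, (P (x₁ j) * P b * P c *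
                (g (x₁ j) b * g b c * g (x₁ j) c)) := by
              refine Finset.sum_congr rfl fun x₁ _ => ?_
              exact sum_fun_prod (fun j b => ∑ c, (P (x₁ j) * P b * P c *
                (g (x₁ j) b * g b c * g (x₁ j) c)))
          _ = ∏ j : Fin L, ∑ a, ∑ b, ∑ c, (P a * P b * P c * (g a b * g b c * g a c)) :=
              sum_fun_prod (fun j a => ∑ b, ∑ c, (P a * P b * P c * (g a b * g b c * g a c)))
          _ = (∑ a, ∑ b, ∑ c, P a * P b * P c * (g a b * g b c * g a c)) ^ L := by
              rw [Finset.prod_const, Finset.card_univ, Fintype.card_fin]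

end Main


/-- the probability of the intersection of the two likelihood-flip
events satisfies
`P[Ẽ₁₂ ∩ Ẽ₁₃] ≤ (L+1)^{|𝒳|³}·exp(-3L·ψ₃(P_XY)) ≤ (L+1)^{|𝒳|³}·exp(-3L·ψ₂(P_XY))`. -/
theorem intersection_transposition_events_bound {𝒳 𝒴 : Type*} [Fintype 𝒳] [Fintype 𝒴]
    (P : 𝒳 → ℝ) (W : 𝒳 → 𝒴 → ℝ)
    (hP : IsPMF P) (hPpos : ∀ x, 0 < P x) (hW : ∀ x, IsPMF (W x)) (L : ℕ) :
    probEtilde12and13 P W L ≤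
        ((L : ℝ) + 1) ^ (Fintype.card 𝒳 ^ 3) * Real.exp (-(3 * (L : ℝ) * psi3 P W)) ∧
      ((L : ℝ) + 1) ^ (Fintype.card 𝒳 ^ 3) * Real.exp (-(3 * (L : ℝ) * psi3 P W)) ≤
        ((L : ℝ) + 1) ^ (Fintype.card 𝒳 ^ 3) * Real.exp (-(3 * (L : ℝ) * psi2 P W)) := by
  have hXne : Nonempty 𝒳 := by
    by_contra h
    rw [not_nonempty_iff] at h
    have h1 := hP.2
    rw [Finset.univ_eq_empty, Finset.sum_empty] at h1
    norm_num at h1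
  have hPnn : ∀ x, 0 ≤ P x := fun x => (hPpos x).le
  have hWnn : ∀ x y, 0 ≤ W x y := fun x y => (hW x).1 y
  have hbsym : ∀ a b : 𝒳, bhat W a b = bhat W b a := by
    intro a b
    simp only [bhat]
    congr 2
    exact Finset.sum_congr rfl fun y _ => by rw [mul_comm]
  set G : 𝒳 → 𝒳 → ℝ := fun a b => Real.exp (-(bhat W a b)) with hGdef
  have hGpos : ∀ a b, 0 < G a b := fun a b => Real.exp_pos _
  have hGsym : ∀ a b, G a b = G b a := fun a b => by
    simp only [hGdef]; rw [hbsym a b]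
  set Z2 : ℝ := ∑ p : 𝒳 × 𝒳, P p.1 * P p.2 * Real.exp (-(2 * bhat W p.1 p.2)) with hZ2def
  set Z3 : ℝ := ∑ z : 𝒳 × 𝒳 × 𝒳, P z.1 * P z.2.1 * P z.2.2 *
    Real.exp (-(bhat W z.1 z.2.1 + bhat W z.2.1 z.2.2 + bhat W z.1 z.2.2)) with hZ3def
  have hZ2pos : 0 < Z2 :=
    Finset.sum_pos (fun p _ => mul_pos (mul_pos (hPpos _) (hPpos _)) (Real.exp_pos _))
      Finset.univ_nonempty
  have hZ3pos : 0 < Z3 :=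
    Finset.sum_pos (fun z _ => mul_pos (mul_pos (mul_pos (hPpos _) (hPpos _)) (hPpos _))
      (Real.exp_pos _)) Finset.univ_nonempty
  have hpsi2 : psi2 P W = -(1/2) * Real.log Z2 := psi2_eq_s12 P W hPpos
  have hpsi3 : psi3 P W = -(1/3) * Real.log Z3 := psi3_eq P W hPpos
  have hZ2n : Z2 = ∑ a, ∑ b, P a * P b * (G a b) ^ 2 := by
    rw [hZ2def]
    simp only [Fintype.sum_prod_type, hGdef]
    refine Finset.sum_congr rfl fun a _ => Finset.sum_congr rfl fun b _ => ?_
    rw [sq, ← Real.exp_add]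
    congr 1
    ring
  have hZ3n : Z3 = ∑ a, ∑ b, ∑ c, P a * P b * P c * (G a b * G b c * G a c) := by
    rw [hZ3def]
    simp only [Fintype.sum_prod_type, hGdef]
    refine Finset.sum_congr rfl fun a _ => Finset.sum_congr rfl fun b _ =>
      Finset.sum_congr rfl fun c _ => ?_
    rw [← Real.exp_add, ← Real.exp_add]
    congr 1
    ring
  have hcs := cs_key P G hPnn (fun a b => (hGpos a b).le) hGsym
  rw [← hZ3n, ← hZ2n] at hcs
  have hlog : 2 * Real.log Z3 ≤ 3 * Real.log Z2 := by
    have h := Real.log_le_log (pow_pos hZ3pos 2) hcs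
    rw [Real.log_pow, Real.log_pow] at h
    push_cast at h
    linarith
  have hpsile : psi2 P W ≤ psi3 P W := by
    rw [hpsi2, hpsi3]; linarith
  have hL0 : (0:ℝ) ≤ (L:ℝ) := Nat.cast_nonneg L
  constructor
  · have hT := prob_le_T_pow P W hPnn hWnn L
    set T : ℝ := ∑ a, ∑ b, ∑ c, P a * P b * P c *
      ((∑ y, Real.sqrt (W a y * W b y)) * (∑ y, Real.sqrt (W b y * W c y)) *
       (∑ y, Real.sqrt (W a y * W c y))) with hTdef
    have hsnn : ∀ a b : 𝒳, (0:ℝ) ≤ ∑ y, Real.sqrt (W a y * W b y) := fun a b =>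
      Finset.sum_nonneg fun y _ => Real.sqrt_nonneg _
    have hTnn : 0 ≤ T := by
      rw [hTdef]
      refine Finset.sum_nonneg fun a _ => Finset.sum_nonneg fun b _ =>
        Finset.sum_nonneg fun c _ => ?_
      exact mul_nonneg (mul_nonneg (mul_nonneg (hPnn a) (hPnn b)) (hPnn c))
        (mul_nonneg (mul_nonneg (hsnn a b) (hsnn b c)) (hsnn a c))
    have hgG : ∀ a b : 𝒳, (∑ y, Real.sqrt (W a y * W b y)) ≤ G a b := by
      intro a b
      rcases eq_or_lt_of_le (hsnn a b) with h | h
      · rw [← h]; exact (hGpos a b).le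
      · have hGe : G a b = Real.exp (Real.log (∑ y, Real.sqrt (W a y * W b y))) := by
          simp only [hGdef, bhat, neg_neg]
        rw [hGe, Real.exp_log h]
    have hTZ3 : T ≤ Z3 := by
      rw [hTdef, hZ3n]
      refine Finset.sum_le_sum fun a _ => Finset.sum_le_sum fun b _ =>
        Finset.sum_le_sum fun c _ => ?_
      refine mul_le_mul_of_nonneg_left ?_
        (mul_nonneg (mul_nonneg (hPnn a) (hPnn b)) (hPnn c))
      have h1 : (∑ y, Real.sqrt (W a y * W b y)) * (∑ y, Real.sqrt (W b y * W c y))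
          ≤ G a b * G b c :=
        mul_le_mul (hgG a b) (hgG b c) (hsnn b c) (hGpos a b).le
      exact mul_le_mul h1 (hgG a c) (hsnn a c)
        (mul_nonneg (hGpos a b).le (hGpos b c).le)
    have hexp : Real.exp (-(3 * (L:ℝ) * psi3 P W)) = Z3 ^ L := by
      rw [hpsi3]
      have harg : -(3 * (L:ℝ) * (-(1/3) * Real.log Z3)) = (L:ℝ) * Real.log Z3 := by ring
      rw [harg, Real.exp_nat_mul, Real.exp_log hZ3pos]
    calc probEtilde12and13 P W L ≤ T ^ L := hT
      _ ≤ Z3 ^ L := pow_le_pow_left₀ hTnn hTZ3 L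
      _ = Real.exp (-(3 * (L:ℝ) * psi3 P W)) := hexp.symm
      _ ≤ ((L:ℝ) + 1) ^ (Fintype.card 𝒳 ^ 3) * Real.exp (-(3 * (L:ℝ) * psi3 P W)) := by
          refine le_mul_of_one_le_left (Real.exp_nonneg _) (one_le_pow₀ ?_)
          linarith
  · refine mul_le_mul_of_nonneg_left (Real.exp_le_exp.mpr ?_) (by positivity)
    nlinarith [mul_nonneg hL0 (sub_nonneg.mpr hpsile)]
end
end

section
/- Assume d(x₁,x₂) < ∞ for all x₁,x₂ ∈ 𝒳. Let f(Q) := (1/2)·D_KL(Q ‖ P_X⊗P_X) + d(Q) for joint PMFs Q on 𝒳², and let c := 2·max_{x∈𝒳}(−log P_X(x)) + max_{x₁,x₂∈𝒳} d(x₁,x₂). Then for any joint PMFs Q, Q̄ on 𝒳² with ℓ₁-distance t := Σ_{x₁,x₂} |Q(x₁,x₂) − Q̄(x₁,x₂)| satisfying 0 < t ≤ 1/2, it holds that |f(Q) − f(Q̄)| ≤ t·( log(|𝒳|²/t) + c ). -/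
open Real BigOperators Finset
open scoped Classical

noncomputable section

lemma aux_ii {s : ℝ} (h0 : 0 ≤ s) (h2 : s ≤ 1/2) :
    s * Real.log s ≤ (1 - s) * Real.log (1 - s) := by
  set g : ℝ → ℝ := fun u => (1 - u) * Real.log (1 - u) - u * Real.log u with hg
  have hcont : Continuous g :=
    (Real.continuous_mul_log.comp (continuous_const.sub continuous_id)).sub
      Real.continuous_mul_log
  have hderiv : ∀ u ∈ Set.Ioo (0:ℝ) (1/2),
      HasDerivAt g (-(Real.log (1-u) + 1) - (Real.log u + 1)) u := by
    intro u hu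
    have hne : (1 : ℝ) - u ≠ 0 := by nlinarith [hu.2]
    have h1 : HasDerivAt (fun u : ℝ => (1 - u) * Real.log (1 - u)) (-(Real.log (1-u) + 1)) u := by
      have := (Real.hasDerivAt_mul_log hne).comp u
        ((hasDerivAt_const u (1:ℝ)).sub (hasDerivAt_id u))
      simpa [Function.comp_def] using this
    exact h1.sub (Real.hasDerivAt_mul_log (ne_of_gt hu.1))
  have hconc : ConcaveOn ℝ (Set.Icc 0 (1/2)) g := by
    apply AntitoneOn.concaveOn_of_deriv (convex_Icc _ _) hcont.continuousOn
    · rw [interior_Icc]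
      intro u hu
      exact ((hderiv u hu).differentiableAt).differentiableWithinAt
    · rw [interior_Icc]
      intro a ha b hb hab
      rw [(hderiv a ha).deriv, (hderiv b hb).deriv]
      have hlog : Real.log (a * (1 - a)) ≤ Real.log (b * (1 - b)) := by
        apply Real.log_le_log (by nlinarith [ha.1, ha.2])
        nlinarith [ha.1, ha.2, hb.1, hb.2]
      rw [Real.log_mul (ne_of_gt ha.1) (by nlinarith [ha.2]),
        Real.log_mul (ne_of_gt hb.1) (by nlinarith [hb.2])] at hlog
      linarith
  have h0' : g 0 = 0 := by simp [hg]
  have h1' : g (1/2) = 0 := by norm_num [hg]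
  have hmem0 : (0:ℝ) ∈ Set.Icc (0:ℝ) (1/2) := Set.left_mem_Icc.2 (by norm_num)
  have hmem1 : (1/2:ℝ) ∈ Set.Icc (0:ℝ) (1/2) := Set.right_mem_Icc.2 (by norm_num)
  have hco := hconc.2 hmem0 hmem1 (show (0:ℝ) ≤ 1 - 2*s by linarith)
    (show (0:ℝ) ≤ 2*s by linarith) (by ring)
  have hpt : (1 - 2*s) • (0:ℝ) + (2*s) • (1/2:ℝ) = s := by
    simp only [smul_eq_mul]; ring
  rw [hpt, h0', h1'] at hco
  simp only [smul_eq_mul, mul_zero, add_zero] at hco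
  have : 0 ≤ g s := by linarith
  simp only [hg] at this
  linarith

lemma aux_B {x s : ℝ} (hx : 0 ≤ x) (hs : 0 < s) (hs2 : s ≤ 1/2) (hxs : x + s ≤ 1) :
    (x + s) * Real.log (x + s) - x * Real.log x ≤ -(s * Real.log s) := by
  set ζ : ℝ → ℝ := fun r => (r + s) * Real.log (r + s) - r * Real.log r with hζ
  have hcont : Continuous ζ :=
    (Real.continuous_mul_log.comp (continuous_id.add continuous_const)).sub
      Real.continuous_mul_log
  have hderiv : ∀ r ∈ Set.Ioo (0:ℝ) (1 - s),
      HasDerivAt ζ ((Real.log (r+s) + 1) - (Real.log r + 1)) r := by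
    intro r hr
    have h1 : HasDerivAt (fun r : ℝ => (r + s) * Real.log (r + s)) (Real.log (r+s) + 1) r := by
      have := (Real.hasDerivAt_mul_log (x := r + s) (ne_of_gt (by linarith [hr.1] : (0:ℝ) < r + s))).comp r
        ((hasDerivAt_id r).add_const s)
      simpa [Function.comp_def] using this
    exact h1.sub (Real.hasDerivAt_mul_log (ne_of_gt hr.1))
  have hmono : MonotoneOn ζ (Set.Icc 0 (1 - s)) := by
    apply monotoneOn_of_deriv_nonneg (convex_Icc _ _) hcont.continuousOn
    · rw [interior_Icc]
      intro r hr
      exact ((hderiv r hr).differentiableAt).differentiableWithinAt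
    · rw [interior_Icc]
      intro r hr
      rw [(hderiv r hr).deriv]
      have : Real.log r ≤ Real.log (r + s) := Real.log_le_log hr.1 (by linarith)
      linarith
  have h1 : ζ x ≤ ζ (1 - s) :=
    hmono ⟨hx, by linarith⟩ ⟨by linarith, le_refl _⟩ (by linarith)
  have h2 : ζ (1 - s) = -((1-s) * Real.log (1-s)) := by
    simp only [hζ, sub_add_cancel, Real.log_one, one_mul]
    ring
  have h3 := aux_ii hs.le hs2
  have h4 : ζ x = (x + s) * Real.log (x + s) - x * Real.log x := rfl
  linarith

lemma aux_pt {x y : ℝ} (hx0 : 0 ≤ x) (hy0 : 0 ≤ y) (hx1 : x ≤ 1) (hy1 : y ≤ 1)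
    (hd : |x - y| ≤ 1/2) :
    |x * Real.log x - y * Real.log y| ≤ -(|x - y| * Real.log |x - y|) := by
  wlog hxy : x ≤ y generalizing x y
  · have := this hy0 hx0 hy1 hx1 (by rwa [abs_sub_comm]) (le_of_not_ge hxy)
    rwa [abs_sub_comm (y * Real.log y), abs_sub_comm y] at this
  rcases eq_or_lt_of_le hxy with rfl | hlt
  · simp
  have hs : 0 < y - x := by linarith
  have habs : |x - y| = y - x := by rw [abs_sub_comm]; exact abs_of_pos hs
  rw [habs]
  rw [habs] at hd
  set s := y - x with hsdef
  have hys : y = x + s := by simp [hsdef]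
  have hB := aux_B hx0 hs hd (by rw [← hys]; exact hy1)
  have hA : x * Real.log x + s * Real.log s ≤ (x + s) * Real.log (x + s) := by
    have h1 : x * Real.log x ≤ x * Real.log (x + s) := by
      rcases eq_or_lt_of_le hx0 with h | h
      · simp [← h]
      · exact mul_le_mul_of_nonneg_left (Real.log_le_log h (by linarith)) hx0
    have h2 : s * Real.log s ≤ s * Real.log (x + s) :=
      mul_le_mul_of_nonneg_left (Real.log_le_log hs (by linarith)) hs.le
    have h3 : (x + s) * Real.log (x + s)
        = x * Real.log (x + s) + s * Real.log (x + s) := by ring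
    linarith
  rw [abs_le]
  constructor <;> rw [hys] <;> linarith

/-- equicontinuity of the rate-function objective: with
`f(Q) = (1/2)·D_KL(Q‖P⊗P) + d(Q)` and
`c = 2·max_x(-log P_X(x)) + max_{x₁,x₂} d(x₁,x₂)`, for any joint PMFs `Q, Q̄` on `𝒳²`
at ℓ₁-distance `t` with `0 < t ≤ 1/2`, `|f(Q) - f(Q̄)| ≤ t·(log(|𝒳|²/t) + c)`. -/
theorem rate_function_equicontinuous {𝒳 𝒴 : Type*} [Fintype 𝒳] [Fintype 𝒴] [Nonempty 𝒳]
    (P : 𝒳 → ℝ) (W : 𝒳 → 𝒴 → ℝ)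
    (hP : IsPMF P) (hPpos : ∀ x, 0 < P x) (hW : ∀ x, IsPMF (W x))
    (hfin : ∀ x₁ x₂ : 𝒳, 0 < ∑ y, Real.sqrt (W x₁ y * W x₂ y))
    (f : (𝒳 × 𝒳 → ℝ) → ℝ)
    (hf : ∀ Q : 𝒳 × 𝒳 → ℝ, f Q = (1/2) * klD Q (fun p => P p.1 * P p.2) + dQ W Q)
    (c : ℝ)
    (hc : c = 2 * (Finset.univ.sup' Finset.univ_nonempty fun x : 𝒳 => - Real.log (P x)) +
      Finset.univ.sup' Finset.univ_nonempty fun p : 𝒳 × 𝒳 => bhat W p.1 p.2)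
    (Q Qbar : 𝒳 × 𝒳 → ℝ) (hQ : IsPMF Q) (hQbar : IsPMF Qbar)
    (t : ℝ) (ht : t = ∑ p : 𝒳 × 𝒳, |Q p - Qbar p|)
    (ht0 : 0 < t) (ht12 : t ≤ 1/2) :
    |f Q - f Qbar| ≤ t * (Real.log ((Fintype.card 𝒳 : ℝ) ^ 2 / t) + c) := by
  classical
  set N : ℝ := (Fintype.card 𝒳 : ℝ) ^ 2 with hNdef
  have hn1 : (1:ℝ) ≤ (Fintype.card 𝒳 : ℝ) := by exact_mod_cast Fintype.card_pos
  have hN1 : (1:ℝ) ≤ N := by nlinarith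
  have hN0 : (0:ℝ) < N := by linarith
  -- PMF elementwise bounds
  have hQle : ∀ p, Q p ≤ 1 := fun p => by
    calc Q p ≤ ∑ q, Q q := Finset.single_le_sum (fun q _ => hQ.1 q) (Finset.mem_univ p)
    _ = 1 := hQ.2
  have hQbarle : ∀ p, Qbar p ≤ 1 := fun p => by
    calc Qbar p ≤ ∑ q, Qbar q := Finset.single_le_sum (fun q _ => hQbar.1 q) (Finset.mem_univ p)
    _ = 1 := hQbar.2
  have het : ∀ p : 𝒳 × 𝒳, |Q p - Qbar p| ≤ t := fun p =>
    ht ▸ Finset.single_le_sum (fun q _ => abs_nonneg (Q q - Qbar q)) (Finset.mem_univ p)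
  have hPle1 : ∀ x, P x ≤ 1 := fun x => by
    calc P x ≤ ∑ q, P q := Finset.single_le_sum (fun q _ => (hPpos q).le) (Finset.mem_univ x)
    _ = 1 := hP.2
  -- Bhattacharyya nonneg
  have hbhat0 : ∀ p : 𝒳 × 𝒳, 0 ≤ bhat W p.1 p.2 := by
    intro p
    have h := Finset.sum_sq_le_sum_mul_sum_of_sq_eq_mul Finset.univ
      (r := fun y => Real.sqrt (W p.1 y * W p.2 y)) (f := W p.1) (g := W p.2)
      (fun y _ => (hW p.1).1 y) (fun y _ => (hW p.2).1 y)
      (fun y _ => Real.sq_sqrt (mul_nonneg ((hW p.1).1 y) ((hW p.2).1 y)))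
    rw [(hW p.1).2, (hW p.2).2, mul_one] at h
    have hS : ∑ y, Real.sqrt (W p.1 y * W p.2 y) ≤ 1 := by nlinarith [hfin p.1 p.2]
    have := Real.log_nonpos (hfin p.1 p.2).le hS
    simp only [bhat]
    linarith
  -- the linear weight function g and its bound
  set M := Finset.univ.sup' Finset.univ_nonempty fun x : 𝒳 => - Real.log (P x) with hM
  set Bm := Finset.univ.sup' Finset.univ_nonempty fun p : 𝒳 × 𝒳 => bhat W p.1 p.2 with hBm
  have hM0 : 0 ≤ M := by
    obtain ⟨x⟩ := (inferInstance : Nonempty 𝒳)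
    have h1 : -Real.log (P x) ≤ M := by
      rw [hM]; exact Finset.le_sup' (fun x : 𝒳 => -Real.log (P x)) (Finset.mem_univ x)
    have h2 : Real.log (P x) ≤ 0 := Real.log_nonpos (hPpos x).le (hPle1 x)
    linarith
  set g : 𝒳 × 𝒳 → ℝ := fun p => bhat W p.1 p.2 - (1/2) * Real.log (P p.1 * P p.2) with hgdef
  have hgc : ∀ p, |g p| ≤ c := by
    intro p
    have hb1 : bhat W p.1 p.2 ≤ Bm := by
      rw [hBm]; exact Finset.le_sup' (fun p : 𝒳 × 𝒳 => bhat W p.1 p.2) (Finset.mem_univ p)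
    have hm1 : -Real.log (P p.1) ≤ M := by
      rw [hM]; exact Finset.le_sup' (fun x : 𝒳 => -Real.log (P x)) (Finset.mem_univ p.1)
    have hm2 : -Real.log (P p.2) ≤ M := by
      rw [hM]; exact Finset.le_sup' (fun x : 𝒳 => -Real.log (P x)) (Finset.mem_univ p.2)
    have hl : Real.log (P p.1 * P p.2) = Real.log (P p.1) + Real.log (P p.2) :=
      Real.log_mul (ne_of_gt (hPpos _)) (ne_of_gt (hPpos _))
    have hlog1 : Real.log (P p.1) ≤ 0 := Real.log_nonpos (hPpos _).le (hPle1 _)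
    have hlog2 : Real.log (P p.2) ≤ 0 := Real.log_nonpos (hPpos _).le (hPle1 _)
    have h0 : 0 ≤ g p := by
      simp only [hgdef]
      rw [hl]
      have := hbhat0 p
      linarith
    rw [abs_of_nonneg h0, hc]
    simp only [hgdef]
    rw [hl]
    linarith
  -- expansion of f
  have hsplit : ∀ R : 𝒳 × 𝒳 → ℝ, (∀ p, 0 ≤ R p) →
      f R = 1/2 * (∑ p : 𝒳 × 𝒳, R p * Real.log (R p)) + ∑ p : 𝒳 × 𝒳, R p * g p := by
    intro R hR
    rw [hf]
    have h1 : klD R (fun p : 𝒳 × 𝒳 => P p.1 * P p.2)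
        = ∑ p : 𝒳 × 𝒳, (R p * Real.log (R p) - R p * Real.log (P p.1 * P p.2)) := by
      refine Finset.sum_congr rfl fun p _ => ?_
      rcases eq_or_lt_of_le (hR p) with h | h
      · simp [← h]
      · rw [Real.log_div (ne_of_gt h) (ne_of_gt (mul_pos (hPpos _) (hPpos _)))]; ring
    have h2 : ∑ p : 𝒳 × 𝒳, R p * g p
        = (∑ p : 𝒳 × 𝒳, R p * bhat W p.1 p.2)
          - 1/2 * ∑ p : 𝒳 × 𝒳, R p * Real.log (P p.1 * P p.2) := by
      rw [Finset.mul_sum, ← Finset.sum_sub_distrib]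
      refine Finset.sum_congr rfl fun p _ => ?_
      simp only [hgdef]
      ring
    rw [h1, Finset.sum_sub_distrib, h2]
    show (1:ℝ)/2 * _ + dQ W R = _
    rw [dQ]
    ring
  have hdiff : f Q - f Qbar
      = 1/2 * (∑ p : 𝒳 × 𝒳, (Q p * Real.log (Q p) - Qbar p * Real.log (Qbar p)))
        + ∑ p : 𝒳 × 𝒳, (Q p - Qbar p) * g p := by
    rw [hsplit Q hQ.1, hsplit Qbar hQbar.1, Finset.sum_sub_distrib]
    have h3 : ∑ p : 𝒳 × 𝒳, (Q p - Qbar p) * g p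
        = ∑ p : 𝒳 × 𝒳, Q p * g p - ∑ p : 𝒳 × 𝒳, Qbar p * g p := by
      rw [← Finset.sum_sub_distrib]
      exact Finset.sum_congr rfl fun p _ => by ring
    rw [h3]
    ring
  -- entropy-difference bound
  have hent : |∑ p : 𝒳 × 𝒳, (Q p * Real.log (Q p) - Qbar p * Real.log (Qbar p))|
      ≤ t * Real.log (N / t) := by
    have hterm : ∀ p : 𝒳 × 𝒳, |Q p * Real.log (Q p) - Qbar p * Real.log (Qbar p)|
        ≤ -(|Q p - Qbar p| * Real.log |Q p - Qbar p|) := fun p =>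
      aux_pt (hQ.1 p) (hQbar.1 p) (hQle p) (hQbarle p) (le_trans (het p) ht12)
    have hterm2 : ∀ p : 𝒳 × 𝒳, -(|Q p - Qbar p| * Real.log |Q p - Qbar p|)
        ≤ t / N - |Q p - Qbar p| + |Q p - Qbar p| * Real.log (N / t) := by
      intro p
      rcases eq_or_lt_of_le (abs_nonneg (Q p - Qbar p)) with h | h
      · rw [← h]
        simp only [neg_zero, zero_mul, sub_zero, add_zero, Real.log_zero, mul_zero]
        positivity
      · set e := |Q p - Qbar p| with hedef
        have hlog1 : Real.log (t / (e * N)) ≤ t / (e * N) - 1 :=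
          Real.log_le_sub_one_of_pos (by positivity)
        have hexp : -(e * Real.log e)
            = e * Real.log (t / (e * N)) + e * Real.log (N / t) := by
          rw [Real.log_div (ne_of_gt ht0) (by positivity),
            Real.log_div (by positivity) (ne_of_gt ht0),
            Real.log_mul (ne_of_gt h) (by positivity)]
          ring
        have h4 : e * (t / (e * N) - 1) = t / N - e := by
          field_simp
        have h3 := mul_le_mul_of_nonneg_left hlog1 h.le
        rw [h4] at h3
        have h5 : e * Real.log (t / (e * N)) ≤ t / N - e := h3
        linarith [hexp, h5]
    calc |∑ p : 𝒳 × 𝒳, (Q p * Real.log (Q p) - Qbar p * Real.log (Qbar p))|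
        ≤ ∑ p : 𝒳 × 𝒳, |Q p * Real.log (Q p) - Qbar p * Real.log (Qbar p)| :=
          Finset.abs_sum_le_sum_abs _ _
      _ ≤ ∑ p : 𝒳 × 𝒳, (t / N - |Q p - Qbar p| + |Q p - Qbar p| * Real.log (N / t)) :=
          Finset.sum_le_sum fun p _ => le_trans (hterm p) (hterm2 p)
      _ = t * Real.log (N / t) := by
          rw [Finset.sum_add_distrib, Finset.sum_sub_distrib, Finset.sum_const,
            ← Finset.sum_mul, ← ht]
          have hcard : ((Finset.univ : Finset (𝒳 × 𝒳)).card : ℝ) = N := by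
            rw [Finset.card_univ, Fintype.card_prod, hNdef]
            push_cast
            ring
          rw [nsmul_eq_mul, hcard]
          field_simp
          ring
  -- linear part bound
  have hlin : |∑ p : 𝒳 × 𝒳, (Q p - Qbar p) * g p| ≤ t * c := by
    calc |∑ p : 𝒳 × 𝒳, (Q p - Qbar p) * g p|
        ≤ ∑ p : 𝒳 × 𝒳, |(Q p - Qbar p) * g p| := Finset.abs_sum_le_sum_abs _ _
      _ = ∑ p : 𝒳 × 𝒳, |Q p - Qbar p| * |g p| := by
          exact Finset.sum_congr rfl fun p _ => abs_mul _ _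
      _ ≤ ∑ p : 𝒳 × 𝒳, |Q p - Qbar p| * c :=
          Finset.sum_le_sum fun p _ => mul_le_mul_of_nonneg_left (hgc p) (abs_nonneg _)
      _ = t * c := by rw [← Finset.sum_mul, ← ht, mul_comm]
  -- conclusion
  have hL0 : 0 ≤ Real.log (N / t) := by
    apply Real.log_nonneg
    rw [le_div_iff₀ ht0]
    nlinarith
  have habs : |f Q - f Qbar|
      ≤ 1/2 * |∑ p : 𝒳 × 𝒳, (Q p * Real.log (Q p) - Qbar p * Real.log (Qbar p))|
        + |∑ p : 𝒳 × 𝒳, (Q p - Qbar p) * g p| := by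
    rw [hdiff]
    calc |_ + _| ≤ |1/2 * (∑ p : 𝒳 × 𝒳, (Q p * Real.log (Q p) - Qbar p * Real.log (Qbar p)))|
        + |∑ p : 𝒳 × 𝒳, (Q p - Qbar p) * g p| := abs_add_le _ _
      _ = _ := by rw [abs_mul, abs_of_nonneg (by norm_num : (0:ℝ) ≤ 1/2)]
  have hfinal := le_trans habs (by linarith [hent, hlin] :
    1/2 * |∑ p : 𝒳 × 𝒳, (Q p * Real.log (Q p) - Qbar p * Real.log (Qbar p))|
      + |∑ p : 𝒳 × 𝒳, (Q p - Qbar p) * g p| ≤ 1/2 * (t * Real.log (N / t)) + t * c)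
  have : 1/2 * (t * Real.log (N / t)) + t * c ≤ t * (Real.log (N / t) + c) := by
    nlinarith [mul_nonneg ht0.le hL0]
  linarith
end
end

section
/- Let J, M be positive integers, let p₁,…,p_J > 0 with Σ_{j∈[J]} p_j = 1, let G = (G(1),…,G(J)) be distributed Multinomial(M; (p₁,…,p_J)), and let G̃ = (G̃(1),…,G̃(J)) have mutually independent components with G̃(j) ~ Poisson(M·p_j). Then for every set 𝓔 ⊆ ℕ^J of histogram vectors: P[G ∈ 𝓔] ≤ e·√M · P[G̃ ∈ 𝓔]. -/
open Real BigOperators Finset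
open scoped Classical

set_option maxHeartbeats 1000000

noncomputable section

/-- The Poisson probability mass function with mean `lam`. -/
def poissonP (lam : ℝ) (n : ℕ) : ℝ := Real.exp (-lam) * lam ^ n / n.factorial

/-- The Multinomial(M; p) probability mass function on count vectors. -/
def multinomialP {J : ℕ} (M : ℕ) (p : Fin J → ℝ) (g : Fin J → ℕ) : ℝ :=
  if ∑ j, g j = M then (Nat.multinomial Finset.univ g : ℝ) * ∏ j, p j ^ g j else 0

lemma poissonP_nonneg {lam : ℝ} (hl : 0 ≤ lam) (n : ℕ) : 0 ≤ poissonP lam n := by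
  unfold poissonP
  positivity

lemma poissonP_summable (lam : ℝ) : Summable (poissonP lam) := by
  have := (Real.summable_pow_div_factorial lam).mul_left (Real.exp (-lam))
  refine this.congr fun n => ?_
  unfold poissonP
  ring

/-- Summability of finite products of summable nonneg families over pi types. -/
lemma summable_pi_prod : ∀ (J : ℕ) (f : Fin J → ℕ → ℝ),
    (∀ j, Summable (f j)) → (∀ j n, 0 ≤ f j n) →
    Summable (fun g : Fin J → ℕ => ∏ j, f j (g j)) := by
  intro J
  induction J with
  | zero =>
    intro f _ _
    exact .of_finite
  | succ n ih =>
    intro f hf hf0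
    have h1 : Summable (fun x : ℕ × (Fin n → ℕ) =>
        f 0 x.1 * ∏ j : Fin n, f j.succ (x.2 j)) := by
      exact Summable.mul_of_nonneg (f := f 0)
        (g := fun y : Fin n → ℕ => ∏ j : Fin n, f j.succ (y j)) (hf 0)
        (ih (fun j => f j.succ) (fun j => hf j.succ) (fun j => hf0 j.succ))
        (fun x => hf0 0 x)
        (fun x => Finset.prod_nonneg fun j _ => hf0 j.succ (x j))
    have he : Summable ((fun g : Fin (n+1) → ℕ => ∏ j, f j (g j)) ∘
        (Fin.consEquiv (fun _ => ℕ))) := by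
      convert h1 using 1
      funext x
      simp [Fin.prod_univ_succ, Fin.consEquiv]
    exact (Equiv.summable_iff _).mp he

/-- Stirling-type bound: `M! ≤ e √M (M/e)^M` for `M ≥ 1`. -/
lemma factorial_le_stirling (M : ℕ) (hM : 0 < M) :
    (M.factorial : ℝ) ≤ Real.exp 1 * Real.sqrt M * ((M : ℝ) / Real.exp 1) ^ M := by
  obtain ⟨k, rfl⟩ : ∃ k, M = k + 1 := ⟨M - 1, (Nat.succ_pred_eq_of_pos hM).symm⟩
  have h := Stirling.stirlingSeq'_antitone (Nat.zero_le k)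
  simp only [Function.comp] at h
  rw [show Nat.succ 0 = 1 from rfl, Stirling.stirlingSeq_one] at h
  have hpos : (0:ℝ) < Real.sqrt (2 * (k+1:ℕ)) * (((k+1:ℕ):ℝ) / Real.exp 1) ^ (k+1) := by
    have : (0:ℝ) < ((k+1:ℕ):ℝ) := by positivity
    positivity
  have hdef : Stirling.stirlingSeq (k+1) =
      ((k+1:ℕ).factorial : ℝ) / (Real.sqrt (2 * (k+1:ℕ)) * (((k+1:ℕ):ℝ) / Real.exp 1) ^ (k+1)) :=
    rfl
  rw [hdef, div_le_div_iff₀ hpos (by positivity)] at h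
  · calc ((k+1:ℕ).factorial : ℝ)
        ≤ Real.exp 1 * (Real.sqrt (2 * (k+1:ℕ)) * (((k+1:ℕ):ℝ) / Real.exp 1) ^ (k+1)) /
            Real.sqrt 2 := by
          rw [le_div_iff₀ (by positivity)]
          linarith [h]
      _ = Real.exp 1 * Real.sqrt ((k+1:ℕ)) * (((k+1:ℕ):ℝ) / Real.exp 1) ^ (k+1) := by
          rw [Real.sqrt_mul (by norm_num)]
          field_simp

/-- Poissonization of the multinomial distribution: if
`G ~ Multinomial(M; (p₁,…,p_J))` and `G̃` has independent components
`G̃(j) ~ Poisson(M·p_j)`, then for every set `𝓔` of histogram vectors,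
`P[G ∈ 𝓔] ≤ e·√M·P[G̃ ∈ 𝓔]`. -/
theorem poissonization_of_multinomial (J M : ℕ) (hJ : 0 < J) (hM : 0 < M)
    (p : Fin J → ℝ) (hp : ∀ j, 0 < p j) (hsum : ∑ j, p j = 1)
    (E : Set (Fin J → ℕ)) :
    (∑' g : Fin J → ℕ, E.indicator (multinomialP M p) g) ≤
      Real.exp 1 * Real.sqrt M *
        ∑' g : Fin J → ℕ, E.indicator (fun g => ∏ j, poissonP ((M : ℝ) * p j) (g j)) g := by
  -- nonnegativity facts
  have hprod_nonneg : ∀ g : Fin J → ℕ, 0 ≤ ∏ j, poissonP ((M : ℝ) * p j) (g j) := fun g =>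
    Finset.prod_nonneg fun j _ => poissonP_nonneg (mul_nonneg (Nat.cast_nonneg M) (hp j).le) _
  have hmult_nonneg : ∀ g : Fin J → ℕ, 0 ≤ multinomialP M p g := by
    intro g
    unfold multinomialP
    split
    · exact mul_nonneg (Nat.cast_nonneg _) (Finset.prod_nonneg fun j _ => pow_nonneg (hp j).le _)
    · exact le_refl 0
  -- pointwise key inequality
  have key : ∀ g : Fin J → ℕ, multinomialP M p g ≤
      Real.exp 1 * Real.sqrt M * ∏ j, poissonP ((M : ℝ) * p j) (g j) := by
    intro g
    unfold multinomialP
    split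
    case isTrue hg =>
      -- rewrite the product of Poisson masses
      have hD : (0:ℝ) < ∏ j, ((g j).factorial : ℝ) :=
        Finset.prod_pos fun j _ => by positivity
      have hP : (0:ℝ) < ∏ j, p j ^ g j :=
        Finset.prod_pos fun j _ => pow_pos (hp j) _
      have hprod : ∏ j, poissonP ((M : ℝ) * p j) (g j) =
          Real.exp (-(M:ℝ)) * (M:ℝ) ^ M * (∏ j, p j ^ g j) / ∏ j, ((g j).factorial : ℝ) := by
        unfold poissonP
        rw [Finset.prod_div_distrib, Finset.prod_mul_distrib]
        congr 1
        rw [← Real.exp_sum]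
        have hs : ∑ j, -((M:ℝ) * p j) = -(M:ℝ) := by
          rw [Finset.sum_neg_distrib, ← Finset.mul_sum, hsum, mul_one]
        rw [hs]
        have : ∏ j, ((M:ℝ) * p j) ^ g j = (M:ℝ) ^ M * ∏ j, p j ^ g j := by
          simp_rw [mul_pow, Finset.prod_mul_distrib, Finset.prod_pow_eq_pow_sum, hg]
        rw [this]
        ring
      have hmult : (Nat.multinomial Finset.univ g : ℝ) =
          (M.factorial : ℝ) / ∏ j, ((g j).factorial : ℝ) := by
        have hspec := Nat.multinomial_spec Finset.univ g
        rw [hg] at hspec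
        have : ((∏ j, (g j).factorial) * Nat.multinomial Finset.univ g : ℕ) = M.factorial := hspec
        field_simp
        push_cast [← this]
        ring
      rw [hprod, hmult]
      rw [div_mul_eq_mul_div, div_le_iff₀ hD, mul_comm (Real.exp 1 * Real.sqrt M) _,
        div_mul_eq_mul_div, mul_comm _ (Real.exp 1 * Real.sqrt M), ← mul_assoc,
        div_mul_eq_mul_div, le_div_iff₀ hD]
      have hfac := factorial_le_stirling M hM
      have hpow : ((M:ℝ) / Real.exp 1) ^ M = Real.exp (-(M:ℝ)) * (M:ℝ) ^ M := by
        rw [div_pow, ← Real.exp_nat_mul, mul_one, Real.exp_neg, div_eq_mul_inv, mul_comm]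
      rw [hpow] at hfac
      exact (mul_le_mul_of_nonneg_right (mul_le_mul_of_nonneg_right hfac hP.le)
        hD.le).trans_eq (by ring)
    case isFalse =>
      exact mul_nonneg (by positivity) (hprod_nonneg g)
  -- summability
  have hSumRHSfull : Summable (fun g : Fin J → ℕ => ∏ j, poissonP ((M : ℝ) * p j) (g j)) :=
    summable_pi_prod J (fun j => poissonP ((M : ℝ) * p j))
      (fun j => poissonP_summable _) (fun j n => poissonP_nonneg (mul_nonneg (Nat.cast_nonneg M) (hp j).le) n)
  have hSumRHS : Summable (fun g : Fin J → ℕ =>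
      E.indicator (fun g => ∏ j, poissonP ((M : ℝ) * p j) (g j)) g) := by
    refine hSumRHSfull.of_nonneg_of_le (fun g => Set.indicator_nonneg (fun g _ => hprod_nonneg g) g)
      (fun g => Set.indicator_le_self' (fun g _ => hprod_nonneg g) g)
  have hSumLHS : Summable (fun g : Fin J → ℕ => E.indicator (multinomialP M p) g) := by
    apply summable_of_ne_finset_zero (s := Fintype.piFinset (fun _ : Fin J => Finset.range (M+1)))
    intro g hg
    have : ∑ j, g j ≠ M := by
      intro hgs
      apply hg
      rw [Fintype.mem_piFinset]
      intro j
      rw [Finset.mem_range]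
      have : g j ≤ ∑ i, g i := Finset.single_le_sum (fun i _ => Nat.zero_le (g i)) (Finset.mem_univ j)
      omega
    have hz : multinomialP M p g = 0 := by
      unfold multinomialP
      rw [if_neg this]
    rw [Set.indicator_apply]
    split <;> simp [hz]
  -- conclude
  calc (∑' g : Fin J → ℕ, E.indicator (multinomialP M p) g)
      ≤ ∑' g : Fin J → ℕ, Real.exp 1 * Real.sqrt M *
          E.indicator (fun g => ∏ j, poissonP ((M : ℝ) * p j) (g j)) g := by
        refine Summable.tsum_le_tsum (fun g => ?_) hSumLHS (hSumRHS.mul_left _)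
        rw [Set.indicator_apply, Set.indicator_apply]
        split
        · exact key g
        · simp
    _ = Real.exp 1 * Real.sqrt M *
          ∑' g : Fin J → ℕ, E.indicator (fun g => ∏ j, poissonP ((M : ℝ) * p j) (g j)) g :=
        tsum_mul_left
end
end
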